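/- arXiv:2003.01846 — 11 statements merged into one kernel-verified Lean document; each statement's English description precedes it below -/
import Mathlib

section
/- Let G be a graph with a clique cutset K, with a partition (A, B, K) of V(G) such that A is anticomplete to B and A, B are nonempty. Assume that either K = {k} is a single vertex with a neighbor in A, or no vertex of B is complete to K. Then every maximal clique of the induced subgraph H = G[A ∪ K] is also a maximal clique of G. -/
open SimpleGraph

section Defs

variable {V : Type*}

/-- A stable (independent) set of a graph. -/
def IsStable (G : SimpleGraph V) (S : Set V) : Prop :=
  ∀ ⦃u v : V⦄, u ∈ S → v ∈ S → ¬ G.Adj u v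

/-- `C` is a maximal clique of the induced subgraph `G[W]`. -/
def IsMaxCliqueOn (G : SimpleGraph V) (W C : Set V) : Prop :=
  C ⊆ W ∧ G.IsClique C ∧ ∀ D : Set V, D ⊆ W → G.IsClique D → C ⊆ D → D = C

/-- `C` is a maximal clique of `G`. -/
def IsMaxClique (G : SimpleGraph V) (C : Set V) : Prop :=
  G.IsClique C ∧ ∀ D : Set V, G.IsClique D → C ⊆ D → D = C

/-- `S` is a strong stable set of the induced subgraph `G[W]`. -/
def StrongStableOn (G : SimpleGraph V) (W S : Set V) : Prop :=
  S ⊆ W ∧ IsStable G S ∧ ∀ C : Set V, IsMaxCliqueOn G W C → C.Nonempty → (S ∩ C).Nonempty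

/-- `S` is a strong stable set of `G`. -/
def StrongStable (G : SimpleGraph V) (S : Set V) : Prop :=
  IsStable G S ∧ ∀ C : Set V, IsMaxClique G C → C.Nonempty → (S ∩ C).Nonempty

/-- The induced subgraph `G[W]` is strongly perfect. -/
def StronglyPerfectOn (G : SimpleGraph V) (W : Set V) : Prop :=
  ∀ U : Set V, U ⊆ W → ∃ S : Set V, StrongStableOn G U S

/-- `G` is strongly perfect: every induced subgraph has a strong stable set. -/
def StronglyPerfect (G : SimpleGraph V) : Prop :=
  ∀ U : Set V, ∃ S : Set V, StrongStableOn G U S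

/-- `G` is minimal non-strongly-perfect. -/
def MinimalNSP (G : SimpleGraph V) : Prop :=
  ¬ StronglyPerfect G ∧ ∀ W : Set V, W ≠ Set.univ → StronglyPerfectOn G W

end Defs

theorem clique_cutset_max_cliques {V : Type*} [Fintype V] (G : SimpleGraph V)
    (A B K : Set V)
    (hUnion : A ∪ B ∪ K = Set.univ)
    (hAB : Disjoint A B) (hAK : Disjoint A K) (hBK : Disjoint B K)
    (hanti : ∀ a ∈ A, ∀ b ∈ B, ¬ G.Adj a b)
    (hA : A.Nonempty) (hB : B.Nonempty)
    (hK : G.IsClique K)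
    (hside : (∃ k : V, K = {k} ∧ ∃ a ∈ A, G.Adj k a) ∨
      (∀ b ∈ B, ¬ ∀ x ∈ K, G.Adj b x))
    (C : Set V) (hC : IsMaxCliqueOn G (A ∪ K) C) :
    IsMaxClique G C := by
  obtain ⟨hCsub, hCclique, hCmax⟩ := hC
  refine ⟨hCclique, ?_⟩
  intro D hD hCD
  by_cases hDsub : D ⊆ A ∪ K
  · exact hCmax D hDsub hD hCD
  · exfalso
    rw [Set.not_subset] at hDsub
    obtain ⟨d, hdD, hdAK⟩ := hDsub
    have hdB : d ∈ B := by
      have hd : d ∈ A ∪ B ∪ K := hUnion ▸ Set.mem_univ d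
      rcases hd with (h | h) | h
      · exact absurd (Or.inl h) hdAK
      · exact h
      · exact absurd (Or.inr h) hdAK
    -- C ⊆ K
    have hCK : C ⊆ K := by
      intro c hc
      rcases hCsub hc with hcA | hcK
      · exfalso
        have hne : c ≠ d := fun h => hAB.ne_of_mem hcA hdB h
        exact hanti c hcA d hdB (hD (hCD hc) hdD hne)
      · exact hcK
    rcases hside with ⟨k, hKk, a, haA, hka⟩ | hside2
    · -- K = {k}, k adjacent to a ∈ A
      have hak : a ≠ k := fun h => hAK.ne_of_mem haA (hKk ▸ rfl) h
      have hclique : G.IsClique ({k, a} : Set V) := by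
        intro u hu v hv huv
        rcases hu with rfl | rfl <;> rcases hv with rfl | rfl
        · exact absurd rfl huv
        · exact hka
        · exact hka.symm
        · exact absurd rfl huv
      have hsub : ({k, a} : Set V) ⊆ A ∪ K := by
        intro x hx
        rcases hx with rfl | rfl
        · exact Or.inr (hKk ▸ rfl)
        · exact Or.inl haA
      have hCka : C ⊆ ({k, a} : Set V) := by
        intro x hx
        have : x ∈ ({k} : Set V) := hKk ▸ hCK hx
        exact Or.inl this
      have := hCmax _ hsub hclique hCka
      have haC : a ∈ C := this ▸ (Or.inr rfl : a ∈ ({k, a} : Set V))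
      have : a ∈ ({k} : Set V) := hKk ▸ hCK haC
      exact hak this
    · -- no b ∈ B complete to K
      have hKC : K = C := hCmax K (fun x hx => Or.inr hx) hK hCK
      refine hside2 d hdB ?_
      intro x hx
      have hxC : x ∈ C := hKC ▸ hx
      have hne : d ≠ x := fun h => hBK.ne_of_mem hdB hx h
      exact hD hdD (hCD hxC) hne
end

section
/- Let G be a graph with a clique cutset K partitioning V(G) as (A, B, K) with A anticomplete to B, where either K = {k} is a single vertex with a neighbor in A, or no vertex of B is complete to K. If S is a strong stable set of G, then S ∩ (A ∪ K) is a strong stable set of the induced subgraph G[A ∪ K]. -/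
open SimpleGraph

/-! Every nonempty maximal clique of `G[A ∪ K]` is already a maximal clique of `G`, since no
vertex of `B` is complete to it; hence `S` meets it. -/

namespace IsMaxCliqueOn

variable {V : Type*} {G : SimpleGraph V} {W C : Set V}

theorem isMaxClique_of_forall_exists_not_adj (hC : IsMaxCliqueOn G W C)
    (hout : ∀ x ∉ W, ∃ c ∈ C, ¬ G.Adj x c) : IsMaxClique G C := by
  obtain ⟨hCW, hCcl, hCmax⟩ := hC
  refine ⟨hCcl, fun D hD hCD => hCmax D (fun x hxD => ?_) hD hCD⟩
  by_cases hxC : x ∈ C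
  · exact hCW hxC
  by_contra hxW
  obtain ⟨c, hcC, hxc⟩ := hout x hxW
  exact hxc (hD hxD (hCD hcC) fun hxc => hxC (hxc ▸ hcC))

/-- A vertex of `B` complete to `C` forces `C ⊆ K`; maximality then makes `C = K`, or, when
`K = {k}`, makes `C` absorb the edge `ka`. -/
theorem exists_not_adj_of_clique_cutset {A B K : Set V}
    (hanti : ∀ a ∈ A, ∀ b ∈ B, ¬ G.Adj a b) (hK : G.IsClique K)
    (hside : (∃ k : V, K = {k} ∧ ∃ a ∈ A, G.Adj k a) ∨ (∀ b ∈ B, ¬ ∀ x ∈ K, G.Adj b x))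
    (hC : IsMaxCliqueOn G (A ∪ K) C) (hCne : C.Nonempty) :
    ∀ b ∈ B, ∃ c ∈ C, ¬ G.Adj b c := by
  intro b hb
  by_contra! hbC
  have hCK : C ⊆ K := fun c hc =>
    (hC.1 hc).resolve_left fun hcA => hanti c hcA b hb (hbC c hc).symm
  rcases hside with ⟨k, rfl, a, haA, hka⟩ | hnoncomplete
  · have hCk : C = {k} := (Set.Nonempty.subset_singleton_iff hCne).mp hCK
    have hka_max : ({k, a} : Set V) = C := by
      refine hC.2.2 {k, a} ?_ ((isClique_pair).mpr fun _ => hka) ?_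
      · exact Set.insert_subset (Or.inr rfl) (Set.singleton_subset_iff.mpr (Or.inl haA))
      · exact hCk.trans_subset (Set.singleton_subset_iff.mpr (Set.mem_insert k {a}))
    have hak : a = k := by
      simpa [hCk] using hka_max.subset (Set.mem_insert_of_mem k rfl)
    exact G.loopless.irrefl k (hak ▸ hka)
  · have hKC : K = C := hC.2.2 K Set.subset_union_right hK hCK
    exact hnoncomplete b hb fun x hx => hbC x (hKC ▸ hx)

end IsMaxCliqueOn

theorem clique_cutset_strong_stable_general {V : Type*} (G : SimpleGraph V)
    (A B K : Set V)
    (hUnion : A ∪ B ∪ K = Set.univ)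
    (hanti : ∀ a ∈ A, ∀ b ∈ B, ¬ G.Adj a b)
    (hK : G.IsClique K)
    (hside : (∃ k : V, K = {k} ∧ ∃ a ∈ A, G.Adj k a) ∨
      (∀ b ∈ B, ¬ ∀ x ∈ K, G.Adj b x))
    (S : Set V) (hS : StrongStable G S) :
    StrongStableOn G (A ∪ K) (S ∩ (A ∪ K)) := by
  refine ⟨Set.inter_subset_right, fun u v hu hv => hS.1 hu.1 hv.1, fun C hC hCne => ?_⟩
  have hout : ∀ x ∉ A ∪ K, x ∈ B := fun x hx => by
    have hxU : x ∈ A ∪ B ∪ K := hUnion ▸ Set.mem_univ x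
    grind
  have hCmax : IsMaxClique G C := hC.isMaxClique_of_forall_exists_not_adj fun x hx =>
    hC.exists_not_adj_of_clique_cutset hanti hK hside hCne x (hout x hx)
  obtain ⟨s, hsS, hsC⟩ := hS.2 C hCmax hCne
  exact ⟨s, ⟨hsS, hC.1 hsC⟩, hsC⟩

theorem clique_cutset_strong_stable {V : Type*} [Fintype V] (G : SimpleGraph V)
    (A B K : Set V)
    (hUnion : A ∪ B ∪ K = Set.univ)
    (hAB : Disjoint A B) (hAK : Disjoint A K) (hBK : Disjoint B K)
    (hanti : ∀ a ∈ A, ∀ b ∈ B, ¬ G.Adj a b)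
    (hA : A.Nonempty) (hB : B.Nonempty)
    (hK : G.IsClique K)
    (hside : (∃ k : V, K = {k} ∧ ∃ a ∈ A, G.Adj k a) ∨
      (∀ b ∈ B, ¬ ∀ x ∈ K, G.Adj b x))
    (S : Set V) (hS : StrongStable G S) :
    StrongStableOn G (A ∪ K) (S ∩ (A ∪ K)) :=
  clique_cutset_strong_stable_general G A B K hUnion hanti hK hside S hS
end

section
/- If v is a simplicial vertex of a graph G and S is a strong stable set of G \ {v}, then either S or S ∪ {v} is a strong stable set of G. -/
open SimpleGraph

theorem simplicial_extend_strong_stable {V : Type*} [Fintype V] (G : SimpleGraph V)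
    (v : V) (hv : G.IsClique (G.neighborSet v))
    (S : Set V) (hS : StrongStableOn G {v}ᶜ S) :
    StrongStable G S ∨ StrongStable G (S ∪ {v}) := by
  obtain ⟨hSsub, hSstable, hSmeet⟩ := hS
  have hclique : G.IsClique (insert v (G.neighborSet v)) :=
    hv.insert (fun b hb _ => hb)
  have hsubcl : ∀ C : Set V, G.IsClique C → v ∈ C → C ⊆ insert v (G.neighborSet v) := by
    intro C hC hvC x hx
    by_cases hxv : x = v
    · exact hxv ▸ Set.mem_insert _ _
    · exact Set.mem_insert_of_mem _ (hC hvC hx (fun h => hxv h.symm))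
  have hmeetNoV : ∀ C : Set V, IsMaxClique G C → C.Nonempty → v ∉ C → (S ∩ C).Nonempty := by
    intro C ⟨hCcl, hCmax⟩ hCne hvC
    refine hSmeet C ⟨fun x hx hxv => hvC (Set.mem_singleton_iff.mp hxv ▸ hx), hCcl,
      fun D _ hDcl hCD => hCmax D hDcl hCD⟩ hCne
  by_cases hA : ∃ s ∈ S, G.Adj s v
  · left
    refine ⟨hSstable, fun C hC hCne => ?_⟩
    by_cases hvC : v ∈ C
    · obtain ⟨s, hsS, hsv⟩ := hA
      have hCeq : C = insert v (G.neighborSet v) :=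
        (hC.2 _ hclique (hsubcl C hC.1 hvC)).symm
      exact ⟨s, hsS, hCeq ▸ Set.mem_insert_of_mem _ hsv.symm⟩
    · exact hmeetNoV C hC hCne hvC
  · right
    push_neg at hA
    constructor
    · intro u w hu hw huw
      rcases hu with hu | hu <;> rcases hw with hw | hw
      · exact hSstable hu hw huw
      · exact hA u hu (Set.mem_singleton_iff.mp hw ▸ huw)
      · exact hA w hw (Set.mem_singleton_iff.mp hu ▸ huw).symm
      · exact G.irrefl (Set.mem_singleton_iff.mp hu ▸ Set.mem_singleton_iff.mp hw ▸ huw)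
    · intro C hC hCne
      by_cases hvC : v ∈ C
      · exact ⟨v, Set.mem_union_right _ rfl, hvC⟩
      · obtain ⟨s, hsS, hsC⟩ := hmeetNoV C hC hCne hvC
        exact ⟨s, Set.mem_union_left _ hsS, hsC⟩
end

section
/- A minimal non-strongly-perfect graph has no simplicial vertex. -/
open SimpleGraph

theorem minimalNSP_no_simplicial {V : Type*} [Fintype V] (G : SimpleGraph V)
    (hG : MinimalNSP G) :
    ∀ v : V, ¬ G.IsClique (G.neighborSet v) := by
  intro v hv
  apply hG.1
  intro U
  by_cases hU : U = Set.univ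
  · subst hU
    set W : Set V := {v}ᶜ with hWdef
    have hWne : W ≠ Set.univ := by
      intro h
      have : v ∈ W := h ▸ Set.mem_univ v
      exact this rfl
    obtain ⟨S, hSW, hSstab, hSmax⟩ := hG.2 W hWne W subset_rfl
    -- the unique maximal clique containing v
    have hCv : G.IsClique (insert v (G.neighborSet v)) := by
      intro a ha b hb hab
      rcases ha with rfl | ha
      · rcases hb with rfl | hb
        · exact absurd rfl hab
        · exact hb
      · rcases hb with rfl | hb
        · exact ha.symm
        · exact hv ha hb hab
    have key : ∀ C : Set V, IsMaxCliqueOn G Set.univ C → v ∈ C →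
        C = insert v (G.neighborSet v) := by
      intro C hC hvC
      have hsub : C ⊆ insert v (G.neighborSet v) := by
        intro u hu
        by_cases huv : u = v
        · exact Set.mem_insert_iff.mpr (Or.inl huv)
        · exact Set.mem_insert_of_mem _ ((hC.2.1 hvC hu (Ne.symm huv)))
      exact (hC.2.2 _ (Set.subset_univ _) hCv hsub).symm
    have keyW : ∀ C : Set V, IsMaxCliqueOn G Set.univ C → v ∉ C →
        (S ∩ C).Nonempty := by
      intro C hC hvC
      apply hSmax C _ _
      · refine ⟨fun u hu => ?_, hC.2.1, fun D hD hDcl hCD => hC.2.2 D (Set.subset_univ _) hDcl hCD⟩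
        intro h; exact hvC (h ▸ hu)
      · -- nonempty: C is maximal clique on univ, so if empty, {v} ⊇ C would force C = {v}
        by_contra hne
        rw [Set.not_nonempty_iff_eq_empty] at hne
        subst hne
        have := hC.2.2 {v} (Set.subset_univ _) (G.isClique_singleton v) (Set.empty_subset _)
        exact hvC (this ▸ rfl)
    by_cases hS : (S ∩ G.neighborSet v).Nonempty
    · refine ⟨S, Set.subset_univ _, hSstab, fun C hC _ => ?_⟩
      by_cases hvC : v ∈ C
      · obtain ⟨x, hxS, hxN⟩ := hS
        exact ⟨x, hxS, (key C hC hvC).symm ▸ Set.mem_insert_of_mem _ hxN⟩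
      · exact keyW C hC hvC
    · rw [Set.not_nonempty_iff_eq_empty] at hS
      refine ⟨insert v S, Set.subset_univ _, ?_, fun C hC _ => ?_⟩
      · intro a b ha hb hab
        rcases ha with rfl | ha
        · rcases hb with rfl | hb
          · exact G.irrefl hab
          · exact Set.eq_empty_iff_forall_notMem.mp hS b ⟨hb, hab⟩
        · rcases hb with rfl | hb
          · exact Set.eq_empty_iff_forall_notMem.mp hS a ⟨ha, hab.symm⟩
          · exact hSstab ha hb hab
      · by_cases hvC : v ∈ C
        · exact ⟨v, Set.mem_insert v S, hvC⟩
        · obtain ⟨x, hxS, hxC⟩ := keyW C hC hvC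
          exact ⟨x, Set.mem_insert_of_mem _ hxS, hxC⟩
  · exact hG.2 U hU U subset_rfl
end

section
/- Let G be a graph such that every proper induced subgraph of G with no simplicial vertex is strongly perfect. If G has a strong stable set, then G is strongly perfect. -/
open SimpleGraph

/-!
Induct on the vertex set `U`. If `v` is simplicial in `G[U]`, the only maximal clique of `G[U]`
through `v` is `{v} ∪ N(v)`, and every other maximal clique of `G[U]` is one of `G[U - v]`. So a
strong stable set of `G[U - v]` either meets `N(v)` and is already strong in `G[U]`, or misses it
and stays stable, and becomes strong, once `v` is added. An induced subgraph with no simplicial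
vertex is `G` itself or a member of the basis.
-/

section SimplicialReduction

variable {V : Type*} (G : SimpleGraph V)

def IsSimplicialOn (U : Set V) (v : V) : Prop :=
  G.IsClique {u | u ∈ U ∧ G.Adj v u}

variable {G}

lemma IsMaxCliqueOn.diff_singleton {U C : Set V} {v : V} (hC : IsMaxCliqueOn G U C)
    (hvC : v ∉ C) : IsMaxCliqueOn G (U \ {v}) C :=
  ⟨fun _ hu => ⟨hC.1 hu, fun he => hvC (he ▸ hu)⟩, hC.2.1,
    fun D hD hDcl hCD => hC.2.2 D (fun _ hu => (hD hu).1) hDcl hCD⟩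

lemma IsMaxCliqueOn.eq_insert_of_isSimplicialOn {U C : Set V} {v : V} (hC : IsMaxCliqueOn G U C)
    (hv : v ∈ U) (hsimp : IsSimplicialOn G U v) (hvC : v ∈ C) :
    C = insert v {u | u ∈ U ∧ G.Adj v u} := by
  obtain ⟨hCU, hCcl, hCmax⟩ := hC
  refine (hCmax _ ?_ ?_ ?_).symm
  · rintro u (rfl | hu)
    exacts [hv, hu.1]
  · exact hsimp.insert fun u hu _ => hu.2
  · intro u hu
    rcases eq_or_ne u v with rfl | hne
    · exact Set.mem_insert _ _
    · exact Set.mem_insert_of_mem _ ⟨hCU hu, hCcl hvC hu hne.symm⟩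

lemma StrongStableOn.of_diff_singleton_of_meets_nbhd {U S : Set V} {v : V}
    (hS : StrongStableOn G (U \ {v}) S) (hv : v ∈ U) (hsimp : IsSimplicialOn G U v)
    (hmeet : (S ∩ {u | u ∈ U ∧ G.Adj v u}).Nonempty) : StrongStableOn G U S := by
  refine ⟨hS.1.trans Set.sdiff_subset, hS.2.1, fun C hC hCne => ?_⟩
  by_cases hvC : v ∈ C
  · rw [hC.eq_insert_of_isSimplicialOn hv hsimp hvC]
    exact hmeet.mono (Set.inter_subset_inter_right _ (Set.subset_insert _ _))
  · exact hS.2.2 C (hC.diff_singleton hvC) hCne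

lemma StrongStableOn.insert_of_diff_singleton {U S : Set V} {v : V}
    (hS : StrongStableOn G (U \ {v}) S) (hv : v ∈ U)
    (hmeet : ¬ (S ∩ {u | u ∈ U ∧ G.Adj v u}).Nonempty) : StrongStableOn G U (insert v S) := by
  obtain ⟨hSU, hstab, hcover⟩ := hS
  have hnadj : ∀ u ∈ S, ¬ G.Adj v u := fun u hu hadj => hmeet ⟨u, hu, (hSU hu).1, hadj⟩
  refine ⟨Set.insert_subset hv (hSU.trans Set.sdiff_subset), ?_, fun C hC hCne => ?_⟩
  · rintro a b (rfl | ha) (rfl | hb) hab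
    exacts [G.loopless.irrefl _ hab, hnadj b hb hab, hnadj a ha hab.symm, hstab ha hb hab]
  · by_cases hvC : v ∈ C
    · exact ⟨v, Set.mem_insert _ _, hvC⟩
    · exact (hcover C (hC.diff_singleton hvC) hCne).mono
        (Set.inter_subset_inter_left _ (Set.subset_insert _ _))

lemma exists_strongStableOn_of_diff_singleton {U : Set V} {v : V} (hv : v ∈ U)
    (hsimp : IsSimplicialOn G U v) (h : ∃ S, StrongStableOn G (U \ {v}) S) :
    ∃ S, StrongStableOn G U S := by
  obtain ⟨S, hS⟩ := h
  by_cases hmeet : (S ∩ {u | u ∈ U ∧ G.Adj v u}).Nonempty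
  · exact ⟨S, hS.of_diff_singleton_of_meets_nbhd hv hsimp hmeet⟩
  · exact ⟨insert v S, hS.insert_of_diff_singleton hv hmeet⟩

lemma exists_strongStableOn_of_forall_not_isSimplicialOn [Finite V]
    (h : ∀ U : Set V, (∀ v ∈ U, ¬ IsSimplicialOn G U v) → ∃ S, StrongStableOn G U S)
    (U : Set V) : ∃ S, StrongStableOn G U S := by
  induction U using WellFoundedLT.induction with
  | ind U ih =>
    by_cases hsimp : ∃ v ∈ U, IsSimplicialOn G U v
    · obtain ⟨v, hv, hsimp⟩ := hsimp
      exact exists_strongStableOn_of_diff_singleton hv hsimp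
        (ih _ (Set.sdiff_singleton_ssubset.mpr hv))
    · exact h U fun v hv hsimp' => hsimp ⟨v, hv, hsimp'⟩

end SimplicialReduction

theorem strong_basis_with_sss_stronglyPerfect {V : Type*} [Fintype V] (G : SimpleGraph V)
    (hbasis : ∀ W : Set V, W ≠ Set.univ →
      (∀ v ∈ W, ¬ G.IsClique {u | u ∈ W ∧ G.Adj v u}) → StronglyPerfectOn G W)
    (hS : ∃ S : Set V, StrongStableOn G Set.univ S) :
    StronglyPerfect G := by
  refine exists_strongStableOn_of_forall_not_isSimplicialOn fun U hU => ?_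
  by_cases huniv : U = Set.univ
  · exact huniv ▸ hS
  · exact hbasis U huniv hU U subset_rfl
end

section
/- Every pupa is strongly perfect. -/
open SimpleGraph

/-- Vertices of a pupa: `none` is the head `v`, `some (inl i)` is the hole vertex
`c_{i+1}`, and `some (inr a)` is the path vertex `p_{a+1}`. -/
abbrev PupaV (k t : ℕ) := Option (ZMod k ⊕ Fin t)

/-- The pupa: an even hole `c_1, …, c_k`, an odd induced path `v-p_1-…-p_t-c_1`
(of length `t+1`), with `c_2` complete to `{v, p_1, …, p_t, c_1}` and no other edges. -/
def pupaRel (k t : ℕ) : PupaV k t → PupaV k t → Prop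
  | some (Sum.inl i), some (Sum.inl j) => j = i + 1
  | some (Sum.inr a), some (Sum.inr b) => (b : ℕ) = (a : ℕ) + 1
  | none, some (Sum.inr a) => (a : ℕ) = 0
  | none, some (Sum.inl i) => (t = 0 ∧ i = 0) ∨ i = 1
  | some (Sum.inr a), some (Sum.inl i) => ((a : ℕ) = t - 1 ∧ i = 0) ∨ i = 1
  | _, _ => False

def pupa (k t : ℕ) : SimpleGraph (PupaV k t) := SimpleGraph.fromRel (pupaRel k t)

namespace PupaAux

variable {k t : ℕ}

/-- the special vertex c₂ -/
def c2 (k t : ℕ) : PupaV k t := some (Sum.inl 1)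

/-- position along the long path v, p₁, …, p_t, c₁, c_k, c_{k-1}, …, c₃, (c₂). -/
def pos (k t : ℕ) : PupaV k t → ℕ
  | none => 0
  | some (Sum.inr a) => (a : ℕ) + 1
  | some (Sum.inl m) => if m.val = 0 then t + 1 else t + 1 + (k - m.val)

/-- the vertex at position `j`. -/
def vtx (k t : ℕ) (j : ℕ) : PupaV k t :=
  if h0 : j = 0 then none
  else if h : j ≤ t then some (Sum.inr ⟨j - 1, by omega⟩)
  else some (Sum.inl (↑(k + t + 1 - j)))

lemma pos_le (hk : 4 ≤ k) (x : PupaV k t) : pos k t x ≤ t + k := by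
  haveI : NeZero k := ⟨by omega⟩
  match x with
  | none => simp only [pos]; omega
  | some (Sum.inr a) => have := a.isLt; simp only [pos]; omega
  | some (Sum.inl m) =>
    have := ZMod.val_lt m
    simp only [pos]
    split <;> omega

lemma pos_c2 (hk : 4 ≤ k) : pos k t (c2 k t) = t + k := by
  haveI : NeZero k := ⟨by omega⟩
  have h1 : (1 : ZMod k).val = 1 := ZMod.val_one'' (by omega)
  simp only [c2, pos, h1, if_neg (one_ne_zero)]
  omega

lemma pos_eq_top (hk : 4 ≤ k) (x : PupaV k t) : pos k t x = t + k ↔ x = c2 k t := by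
  haveI : NeZero k := ⟨by omega⟩
  constructor
  · intro h
    match x with
    | none => simp only [pos] at h; omega
    | some (Sum.inr a) => have := a.isLt; simp only [pos] at h; omega
    | some (Sum.inl m) =>
      have hv := ZMod.val_lt m
      simp only [pos] at h
      have hm : m.val = 1 := by split at h <;> omega
      have hc : ((m.val : ℕ) : ZMod k) = m := ZMod.natCast_rightInverse m
      rw [hm] at hc
      simp only [c2, Nat.cast_one] at hc ⊢
      rw [← hc]
  · rintro rfl; exact pos_c2 hk

lemma vtx_pos (hk : 4 ≤ k) (x : PupaV k t) : vtx k t (pos k t x) = x := by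
  haveI : NeZero k := ⟨by omega⟩
  match x with
  | none => rfl
  | some (Sum.inr a) =>
    have := a.isLt
    have hp : pos k t (some (Sum.inr a)) = (a : ℕ) + 1 := rfl
    rw [hp]
    simp only [vtx]
    rw [dif_neg (by omega), dif_pos (by omega)]
    simp only [Option.some.injEq, Sum.inr.injEq]
    exact Fin.ext (by simp)
  | some (Sum.inl m) =>
    have hv := ZMod.val_lt m
    have hcast : ((m.val : ℕ) : ZMod k) = m := ZMod.natCast_rightInverse m
    by_cases h0 : m.val = 0
    · have hp : pos k t (some (Sum.inl m)) = t + 1 := by simp only [pos, if_pos h0]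
      rw [hp]
      simp only [vtx]
      rw [dif_neg (by omega), dif_neg (by omega)]
      have h2 : k + t + 1 - (t + 1) = k := by omega
      rw [h2, ZMod.natCast_self]
      congr 2
      rw [← hcast, h0, Nat.cast_zero]
    · have hp : pos k t (some (Sum.inl m)) = t + 1 + (k - m.val) := by
        simp only [pos, if_neg h0]
      rw [hp]
      simp only [vtx]
      rw [dif_neg (by omega), dif_neg (by omega)]
      have h2 : k + t + 1 - (t + 1 + (k - m.val)) = m.val := by omega
      rw [h2, hcast]

lemma pos_inj (hk : 4 ≤ k) {x y : PupaV k t} (h : pos k t x = pos k t y) : x = y := by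
  rw [← vtx_pos hk x, ← vtx_pos hk y, h]

lemma pos_vtx (hk : 4 ≤ k) {j : ℕ} (hj : j ≤ t + k) : pos k t (vtx k t j) = j := by
  haveI : NeZero k := ⟨by omega⟩
  simp only [vtx]
  by_cases h0 : j = 0
  · rw [dif_pos h0]; simp only [pos]; omega
  · rw [dif_neg h0]
    by_cases ht : j ≤ t
    · rw [dif_pos ht]; simp only [pos]; omega
    · rw [dif_neg ht]
      simp only [pos, ZMod.val_natCast]
      by_cases hj1 : j = t + 1
      · have : (k + t + 1 - j) % k = 0 := by
          subst hj1
          have : k + t + 1 - (t + 1) = k := by omega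
          rw [this, Nat.mod_self]
        rw [if_pos this]
        omega
      · have hlt : k + t + 1 - j < k := by omega
        have hne : (k + t + 1 - j) % k ≠ 0 := by rw [Nat.mod_eq_of_lt hlt]; omega
        rw [if_neg hne, Nat.mod_eq_of_lt hlt]
        omega

lemma adj_succ (hk : 4 ≤ k) {j : ℕ} (hj : j < t + k) :
    (pupa k t).Adj (vtx k t j) (vtx k t (j + 1)) := by
  haveI : NeZero k := ⟨by omega⟩
  have hne : vtx k t j ≠ vtx k t (j + 1) := by
    intro h
    have h1 := pos_vtx (t := t) hk (le_of_lt hj)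
    have h2 := pos_vtx (t := t) hk (by omega : j + 1 ≤ t + k)
    rw [h] at h1; omega
  rw [pupa, SimpleGraph.fromRel_adj]
  refine ⟨hne, ?_⟩
  by_cases h0 : j = 0
  · subst h0
    by_cases ht : t = 0
    · left
      simp only [vtx, dif_pos rfl, dif_neg (by omega : ¬ (1 : ℕ) = 0),
        dif_neg (by omega : ¬ 1 ≤ t)]
      show (t = 0 ∧ _ = 0) ∨ _
      left
      refine ⟨ht, ?_⟩
      have h2 : k + t + 1 - 1 = k := by omega
      rw [h2, ZMod.natCast_self]
    · left
      simp only [vtx, dif_pos rfl, dif_neg (by omega : ¬ (1 : ℕ) = 0),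
        dif_pos (by omega : 1 ≤ t)]
      show ((⟨1 - 1, _⟩ : Fin t) : ℕ) = 0
      simp
  · by_cases ht : j + 1 ≤ t
    · left
      simp only [vtx, dif_neg h0, dif_neg (by omega : ¬ j + 1 = 0), dif_pos (by omega : j ≤ t),
        dif_pos ht]
      show ((⟨j + 1 - 1, _⟩ : Fin t) : ℕ) = ((⟨j - 1, _⟩ : Fin t) : ℕ) + 1
      simp only []
      omega
    · by_cases ht2 : j ≤ t
      · -- j = t, t ≥ 1; vtx j = p_t, vtx (j+1) = c₁
        left
        simp only [vtx, dif_neg h0, dif_neg (by omega : ¬ j + 1 = 0), dif_pos ht2,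
          dif_neg (by omega : ¬ j + 1 ≤ t)]
        show (((⟨j - 1, _⟩ : Fin t) : ℕ) = t - 1 ∧ _ = 0) ∨ _ = 1
        left
        constructor
        · show j - 1 = t - 1
          omega
        · have h2 : k + t + 1 - (j + 1) = k := by omega
          rw [h2, ZMod.natCast_self]
      · -- hole edge
        right
        simp only [vtx, dif_neg h0, dif_neg (by omega : ¬ j + 1 = 0), dif_neg ht2,
          dif_neg (by omega : ¬ j + 1 ≤ t)]
        show ((k + t + 1 - j : ℕ) : ZMod k) = ((k + t + 1 - (j + 1) : ℕ) : ZMod k) + 1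
        have h2 : (k + t + 1 - j : ℕ) = (k + t + 1 - (j + 1)) + 1 := by omega
        rw [h2]
        push_cast
        ring


lemma eq_of_val_eq (hk : 4 ≤ k) {m n : ZMod k} (h : m.val = n.val) : m = n := by
  haveI : NeZero k := ⟨by omega⟩
  rw [← ZMod.natCast_rightInverse m, ← ZMod.natCast_rightInverse n, h]

lemma val_eq_iff (hk : 4 ≤ k) (m : ZMod k) (c : ℕ) (hc : c < k) :
    m = (c : ZMod k) ↔ m.val = c := by
  haveI : NeZero k := ⟨by omega⟩
  constructor
  · rintro rfl; exact ZMod.val_cast_of_lt hc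
  · intro h; rw [← ZMod.natCast_rightInverse m, h]

lemma rel_pos (hk : 4 ≤ k) {x y : PupaV k t} (hx : x ≠ c2 k t) (hy : y ≠ c2 k t)
    (h : pupaRel k t x y) :
    pos k t y = pos k t x + 1 ∨ pos k t x = pos k t y + 1 := by
  haveI : NeZero k := ⟨by omega⟩
  have h1v : (1 : ZMod k).val = 1 := ZMod.val_one'' (by omega)
  match x, y with
  | some (Sum.inl i), some (Sum.inl j) =>
    have hj : j = i + 1 := h
    have hvi := ZMod.val_lt i
    have hvj := ZMod.val_lt j
    have hi1 : i.val ≠ 1 := by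
      intro hc
      have : i = 1 := eq_of_val_eq hk (by rw [hc, h1v])
      exact hx (by rw [c2, this])
    have hj1 : j.val ≠ 1 := by
      intro hc
      have : j = 1 := eq_of_val_eq hk (by rw [hc, h1v])
      exact hy (by rw [c2, this])
    have hmod : j.val = (i.val + 1) % k := by
      rw [hj, ZMod.val_add, h1v]
    have hcase : j.val = i.val + 1 ∨ (i.val = k - 1 ∧ j.val = 0) := by
      rcases Nat.lt_or_ge (i.val + 1) k with hlt | hge
      · left; rw [hmod, Nat.mod_eq_of_lt hlt]
      · right
        have : i.val + 1 = k := by omega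
        rw [hmod, this, Nat.mod_self]
        omega
    simp only [pos]
    split_ifs <;> omega
  | some (Sum.inr a), some (Sum.inr b) =>
    have hb : (b : ℕ) = (a : ℕ) + 1 := h
    simp only [pos]; omega
  | none, some (Sum.inr a) =>
    have ha : (a : ℕ) = 0 := h
    simp only [pos]; omega
  | none, some (Sum.inl i) =>
    have h' : (t = 0 ∧ i = 0) ∨ i = 1 := h
    rcases h' with ⟨ht, hi⟩ | hi
    · have hi0 : i.val = 0 := (ZMod.val_eq_zero i).2 hi
      simp only [pos, if_pos hi0]
      omega
    · exact absurd (by rw [c2, hi]) hy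
  | some (Sum.inr a), some (Sum.inl i) =>
    have h' : ((a : ℕ) = t - 1 ∧ i = 0) ∨ i = 1 := h
    rcases h' with ⟨ha, hi⟩ | hi
    · have hi0 : i.val = 0 := (ZMod.val_eq_zero i).2 hi
      have := a.isLt
      simp only [pos, if_pos hi0]
      omega
    · exact absurd (by rw [c2, hi]) hy
  | none, none => exact h.elim
  | some (Sum.inl i), none => exact h.elim
  | some (Sum.inr a), none => exact h.elim
  | some (Sum.inl i), some (Sum.inr a) => exact h.elim

lemma adj_pos (hk : 4 ≤ k) {x y : PupaV k t} (hx : x ≠ c2 k t) (hy : y ≠ c2 k t)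
    (h : (pupa k t).Adj x y) :
    pos k t y = pos k t x + 1 ∨ pos k t x = pos k t y + 1 := by
  rw [pupa, SimpleGraph.fromRel_adj] at h
  obtain ⟨hne, h | h⟩ := h
  · exact rel_pos hk hx hy h
  · exact (rel_pos hk hy hx h).symm

lemma adj_c2 (hk : 4 ≤ k) (x : PupaV k t) :
    (pupa k t).Adj (c2 k t) x ↔ x ≠ c2 k t ∧ (pos k t x ≤ t + 1 ∨ pos k t x = t + k - 1) := by
  haveI : NeZero k := ⟨by omega⟩
  have h1v : (1 : ZMod k).val = 1 := ZMod.val_one'' (by omega)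
  rw [pupa, SimpleGraph.fromRel_adj]
  match x with
  | none =>
    constructor
    · rintro ⟨hne, -⟩
      exact ⟨fun hc => hne hc.symm, Or.inl (by simp only [pos]; omega)⟩
    · rintro ⟨hne, -⟩
      refine ⟨fun hc => hne hc.symm, Or.inr ?_⟩
      show (t = 0 ∧ (1 : ZMod k) = 0) ∨ (1 : ZMod k) = 1
      exact Or.inr rfl
  | some (Sum.inr a) =>
    have := a.isLt
    constructor
    · rintro ⟨hne, -⟩
      exact ⟨fun hc => hne hc.symm, Or.inl (by simp only [pos]; omega)⟩
    · rintro ⟨hne, -⟩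
      refine ⟨fun hc => hne hc.symm, Or.inr ?_⟩
      show ((a : ℕ) = t - 1 ∧ (1 : ZMod k) = 0) ∨ (1 : ZMod k) = 1
      exact Or.inr rfl
  | some (Sum.inl m) =>
    have hv := ZMod.val_lt m
    have h2 : ((1 : ZMod k) + 1) = ((2 : ℕ) : ZMod k) := by push_cast; ring
    constructor
    · rintro ⟨hne, h | h⟩
      · -- m = 1 + 1
        have hm : m = ((2 : ℕ) : ZMod k) := by rw [show m = (1 : ZMod k) + 1 from h, h2]
        have hm2 : m.val = 2 := (val_eq_iff hk m 2 (by omega)).1 hm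
        refine ⟨fun hc => hne hc.symm, Or.inr ?_⟩
        simp only [pos, if_neg (by omega : ¬ m.val = 0)]
        omega
      · -- 1 = m + 1, so m = 0
        have hm0 : m = 0 := by
          have h' : m + 1 = 0 + 1 := by rw [← h]; ring
          exact add_right_cancel h'
        have hmv : m.val = 0 := (ZMod.val_eq_zero m).2 hm0
        refine ⟨fun hc => hne hc.symm, Or.inl ?_⟩
        simp only [pos, if_pos hmv]
        omega
    · rintro ⟨hne, hp⟩
      have hm1 : m.val ≠ 1 := by
        intro hc
        have : m = 1 := eq_of_val_eq hk (by rw [hc, h1v])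
        exact hne (by rw [c2, this])
      refine ⟨fun hc => hne hc.symm, ?_⟩
      by_cases h0 : m.val = 0
      · right
        show (1 : ZMod k) = m + 1
        have : m = 0 := (ZMod.val_eq_zero m).1 h0
        rw [this, zero_add]
      · left
        show m = 1 + 1
        simp only [pos, if_neg h0] at hp
        have hm2 : m.val = 2 := by omega
        rw [h2]
        exact (val_eq_iff hk m 2 (by omega)).2 hm2


open Classical in
/-- length of the run of `P`-positions immediately below `j`. -/
noncomputable def dd (P : ℕ → Prop) : ℕ → ℕ
  | 0 => 0
  | j + 1 => if P j then dd P j + 1 else 0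

lemma dd_succ_of {P : ℕ → Prop} {j : ℕ} (h : P j) : dd P (j + 1) = dd P j + 1 := by
  rw [dd, if_pos h]

lemma dd_succ_not {P : ℕ → Prop} {j : ℕ} (h : ¬ P j) : dd P (j + 1) = 0 := by
  rw [dd, if_neg h]

open Classical in
/-- the selection rule on the hole segment `[a, b]` with both ends forbidden. -/
noncomputable def chosen (P : ℕ → Prop) (a b j : ℕ) : Prop :=
  P j ∧ a + 1 ≤ j ∧ j ≤ b - 1 ∧
    (if ∀ l, j ≤ l → l ≤ b → P l then Odd (b - j)
     else if ∀ l, a ≤ l → l ≤ j → P l then Odd (j - a) else Odd (dd P j))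

lemma chosen_stab {P : ℕ → Prop} {a b j : ℕ} (h1 : chosen P a b j)
    (h2 : chosen P a b (j + 1)) : False := by
  classical
  obtain ⟨hp, hj1, hj2, hO⟩ := h1
  obtain ⟨hp', hj1', hj2', hO'⟩ := h2
  by_cases hru : ∀ l, j + 1 ≤ l → l ≤ b → P l
  · have hru' : ∀ l, j ≤ l → l ≤ b → P l := by
      intro l hl hl'
      rcases Nat.eq_or_lt_of_le hl with rfl | hlt
      · exact hp
      · exact hru l (by omega) hl'
    rw [if_pos hru'] at hO
    rw [if_pos hru] at hO'
    rw [Nat.odd_iff] at hO hO'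
    omega
  · have hru2 : ¬ ∀ l, j ≤ l → l ≤ b → P l := fun h => hru fun l hl hl' => h l (by omega) hl'
    rw [if_neg hru2] at hO
    rw [if_neg hru] at hO'
    by_cases hrd : ∀ l, a ≤ l → l ≤ j → P l
    · have hrd' : ∀ l, a ≤ l → l ≤ j + 1 → P l := by
        intro l hl hl'
        by_cases hlj : l ≤ j
        · exact hrd l hl hlj
        · have hl2 : l = j + 1 := by omega
          rw [hl2]; exact hp'
      rw [if_pos hrd] at hO
      rw [if_pos hrd'] at hO'
      rw [Nat.odd_iff] at hO hO'
      omega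
    · have hrd' : ¬ ∀ l, a ≤ l → l ≤ j + 1 → P l := fun h => hrd fun l hl hl' => h l hl (by omega)
      rw [if_neg hrd] at hO
      rw [if_neg hrd'] at hO'
      rw [dd_succ_of hp] at hO'
      rw [Nat.odd_iff] at hO hO'
      omega

lemma chosen_hit {P : ℕ → Prop} {a b : ℕ} (hab : a + 2 ≤ b) (heven : (b - a) % 2 = 0)
    {j : ℕ} (hja : a ≤ j) (hjb : j + 1 ≤ b) (hp : P j) (hp1 : P (j + 1)) :
    chosen P a b j ∨ chosen P a b (j + 1) := by
  classical
  by_cases hj0 : j = a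
  · subst hj0
    right
    rw [chosen]
    refine ⟨hp1, le_refl _, by omega, ?_⟩
    by_cases hru : ∀ l, j + 1 ≤ l → l ≤ b → P l
    · rw [if_pos hru, Nat.odd_iff]; omega
    · rw [if_neg hru, if_pos ?_]
      · rw [Nat.odd_iff]; omega
      · intro l hl hl'
        have hl2 : l = j ∨ l = j + 1 := by omega
        rcases hl2 with rfl | rfl
        · exact hp
        · exact hp1
  · by_cases hjb' : j + 1 = b
    · left
      rw [chosen]
      refine ⟨hp, by omega, by omega, ?_⟩
      rw [if_pos ?_]
      · rw [Nat.odd_iff]; omega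
      · intro l hl hl'
        have hl2 : l = j ∨ l = j + 1 := by omega
        rcases hl2 with rfl | rfl
        · exact hp
        · exact hp1
    · by_cases hru : ∀ l, j ≤ l → l ≤ b → P l
      · have hru1 : ∀ l, j + 1 ≤ l → l ≤ b → P l := fun l h h' => hru l (by omega) h'
        by_cases ho : Odd (b - j)
        · left
          exact ⟨hp, by omega, by omega, by rw [if_pos hru]; exact ho⟩
        · right
          refine ⟨hp1, by omega, by omega, ?_⟩
          rw [if_pos hru1, Nat.odd_iff]
          rw [Nat.odd_iff] at ho
          omega
      · have hru1 : ¬ ∀ l, j + 1 ≤ l → l ≤ b → P l := by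
          intro h
          apply hru
          intro l hl hl'
          rcases Nat.eq_or_lt_of_le hl with rfl | hlt
          · exact hp
          · exact h l (by omega) hl'
        by_cases hrd : ∀ l, a ≤ l → l ≤ j → P l
        · have hrd1 : ∀ l, a ≤ l → l ≤ j + 1 → P l := by
            intro l hl hl'
            by_cases hlj : l ≤ j
            · exact hrd l hl hlj
            · have hl2 : l = j + 1 := by omega
              rw [hl2]; exact hp1
          by_cases ho : Odd (j - a)
          · left
            exact ⟨hp, by omega, by omega, by rw [if_neg hru, if_pos hrd]; exact ho⟩
          · right
            refine ⟨hp1, by omega, by omega, ?_⟩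
            rw [if_neg hru1, if_pos hrd1, Nat.odd_iff]
            rw [Nat.odd_iff] at ho
            omega
        · have hrd1 : ¬ ∀ l, a ≤ l → l ≤ j + 1 → P l := fun h => hrd fun l hl hl' =>
            h l hl (by omega)
          by_cases ho : Odd (dd P j)
          · left
            exact ⟨hp, by omega, by omega, by rw [if_neg hru, if_neg hrd]; exact ho⟩
          · right
            refine ⟨hp1, by omega, by omega, ?_⟩
            rw [if_neg hru1, if_neg hrd1, dd_succ_of hp, Nat.odd_iff]
            rw [Nat.odd_iff] at ho
            omega

end PupaAux

open PupaAux

theorem pupa_stronglyPerfect (k t : ℕ) (hk : 4 ≤ k) (hke : Even k) (hte : Even t) :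
    StronglyPerfect (pupa k t) := by
  classical
  haveI : NeZero k := ⟨by omega⟩
  intro U
  let P : ℕ → Prop := fun j => vtx k t j ∈ U
  have hPx : ∀ x ∈ U, P (pos k t x) := by
    intro x hx
    show vtx k t (pos k t x) ∈ U
    rw [vtx_pos hk]
    exact hx
  by_cases hc2 : c2 k t ∈ U
  · -- Case B : c₂ ∈ U
    have hab : (t + 1) + 2 ≤ t + k - 1 := by omega
    have heven : ((t + k - 1) - (t + 1)) % 2 = 0 := by
      have := Nat.even_iff.1 hke
      omega
    have hposj : ∀ j : ℕ, j ≤ (t + k - 1) - 1 → pos k t (vtx k t j) = j := by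
      intro j hj
      exact pos_vtx hk (by omega)
    have hchne : ∀ j, chosen P (t + 1) (t + k - 1) j → vtx k t j ≠ c2 k t := by
      intro j hj hcon
      have h1 := hposj j hj.2.2.1
      rw [hcon, pos_c2 hk] at h1
      have := hj.2.2.1
      omega
    have hchnadj : ∀ j, chosen P (t + 1) (t + k - 1) j →
        ¬ (pupa k t).Adj (c2 k t) (vtx k t j) := by
      intro j hj hadj
      rw [adj_c2 hk] at hadj
      obtain ⟨-, hor⟩ := hadj
      rw [hposj j hj.2.2.1] at hor
      have h1 := hj.2.1
      have h2 := hj.2.2.1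
      rcases hor with h | h <;> omega
    set S : Set (PupaV k t) := insert (c2 k t)
      ({x | ∃ j, chosen P (t + 1) (t + k - 1) j ∧ x = vtx k t j} ∪
       {x | x ∈ U ∧ ∀ w ∈ U, ¬ (pupa k t).Adj x w}) with hS
    have hSU : S ⊆ U := by
      intro x hx
      rcases Set.mem_insert_iff.1 hx with rfl | hx
      · exact hc2
      rcases hx with ⟨j, hj, rfl⟩ | hx
      · exact hj.1
      · exact hx.1
    refine ⟨S, hSU, ?_, ?_⟩
    · -- stable
      intro x y hx hy hadj
      rcases Set.mem_insert_iff.1 hy with rfl | hy'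
      · rcases Set.mem_insert_iff.1 hx with rfl | hx'
        · exact hadj.ne rfl
        rcases hx' with ⟨j, hj, rfl⟩ | hx''
        · exact hchnadj j hj hadj.symm
        · exact hx''.2 _ hc2 hadj
      rcases hy' with ⟨j, hj, rfl⟩ | hy''
      · rcases Set.mem_insert_iff.1 hx with rfl | hx'
        · exact hchnadj j hj hadj
        rcases hx' with ⟨j', hj', rfl⟩ | hx''
        · have hx2 := hchne j' hj'
          have hy2 := hchne j hj
          have hpj := hposj _ hj.2.2.1
          have hpj' := hposj _ hj'.2.2.1
          rcases adj_pos hk hx2 hy2 hadj with h | h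
          · rw [hpj, hpj'] at h
            rw [h] at hj
            exact chosen_stab hj' hj
          · rw [hpj, hpj'] at h
            rw [h] at hj'
            exact chosen_stab hj hj'
        · exact hx''.2 _ (hSU hy) hadj
      · exact hy''.2 _ (hSU hx) hadj.symm
    · -- maximal cliques
      rintro C ⟨hCU, hCcl, hCmax⟩ ⟨x0, hx0⟩
      by_cases hcC : c2 k t ∈ C
      · exact ⟨_, Set.mem_insert _ _, hcC⟩
      by_cases hall : ∀ z ∈ C, (pupa k t).Adj (c2 k t) z
      · exfalso
        have hD := hCmax (insert (c2 k t) C)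
          (Set.insert_subset hc2 hCU)
          (SimpleGraph.isClique_insert.2 ⟨hCcl, fun z hz _ => hall z hz⟩)
          (Set.subset_insert _ _)
        apply hcC
        rw [← hD]
        exact Set.mem_insert _ _
      · push_neg at hall
        obtain ⟨x, hxC, hxnadj⟩ := hall
        have hx2 : x ≠ c2 k t := fun h => hcC (h ▸ hxC)
        have hxU := hCU hxC
        have hprange : (t + 1) + 1 ≤ pos k t x ∧ pos k t x ≤ (t + k - 1) - 1 := by
          have h1 := pos_le hk x
          have h2 : pos k t x ≠ t + k := fun h => hx2 ((pos_eq_top hk x).1 h)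
          have h3 : ¬ (pos k t x ≤ t + 1 ∨ pos k t x = t + k - 1) := by
            intro h
            exact hxnadj ((adj_c2 hk x).2 ⟨hx2, h⟩)
          rw [not_or] at h3
          obtain ⟨h4, h5⟩ := h3
          omega
        by_cases hy : ∃ y ∈ C, y ≠ x
        · obtain ⟨y, hyC, hyx⟩ := hy
          have hy2 : y ≠ c2 k t := fun h => hcC (h ▸ hyC)
          have hadj : (pupa k t).Adj x y := hCcl hxC hyC fun h => hyx h.symm
          have hyU := hCU hyC
          rcases adj_pos hk hx2 hy2 hadj with h | h
          · have hhit := chosen_hit (P := P) hab heven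
              (j := pos k t x) (by omega) (by omega) (hPx x hxU)
              (by rw [← h]; exact hPx y hyU)
            rcases hhit with hch | hch
            · exact ⟨x, Set.mem_insert_iff.2
                (Or.inr (Or.inl ⟨_, hch, (vtx_pos hk x).symm⟩)), hxC⟩
            · refine ⟨y, Set.mem_insert_iff.2
                (Or.inr (Or.inl ⟨pos k t y, ?_, (vtx_pos hk y).symm⟩)), hyC⟩
              rw [h]
              exact hch
          · have hhit := chosen_hit (P := P) hab heven
              (j := pos k t y) (by omega) (by omega) (hPx y hyU)
              (by rw [← h]; exact hPx x hxU)
            rcases hhit with hch | hch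
            · exact ⟨y, Set.mem_insert_iff.2
                (Or.inr (Or.inl ⟨_, hch, (vtx_pos hk y).symm⟩)), hyC⟩
            · refine ⟨x, Set.mem_insert_iff.2
                (Or.inr (Or.inl ⟨pos k t x, ?_, (vtx_pos hk x).symm⟩)), hxC⟩
              rw [h]
              exact hch
        · push_neg at hy
          have hiso : ∀ w ∈ U, ¬ (pupa k t).Adj x w := by
            intro w hw hadj
            have hD := hCmax (insert w C) (Set.insert_subset hw hCU)
              (SimpleGraph.isClique_insert.2 ⟨hCcl, fun z hz hne => by
                rw [hy z hz]
                exact hadj.symm⟩)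
              (Set.subset_insert _ _)
            have hwC : w ∈ C := by rw [← hD]; exact Set.mem_insert _ _
            rw [hy w hwC] at hadj
            exact hadj.ne rfl
          exact ⟨x, Set.mem_insert_iff.2 (Or.inr (Or.inr ⟨hxU, hiso⟩)), hxC⟩
  · -- Case A : c₂ ∉ U
    refine ⟨{x | x ∈ U ∧ Even (dd P (pos k t x))}, fun x hx => hx.1, ?_, ?_⟩
    · rintro x y ⟨hxU, hxE⟩ ⟨hyU, hyE⟩ hadj
      have hx2 : x ≠ c2 k t := fun h => hc2 (h ▸ hxU)
      have hy2 : y ≠ c2 k t := fun h => hc2 (h ▸ hyU)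
      rcases adj_pos hk hx2 hy2 hadj with h | h
      · rw [h, dd_succ_of (hPx x hxU)] at hyE
        exact (Nat.even_add_one.1 hyE) hxE
      · rw [h, dd_succ_of (hPx y hyU)] at hxE
        exact (Nat.even_add_one.1 hxE) hyE
    · rintro C ⟨hCU, hCcl, hCmax⟩ ⟨x, hxC⟩
      have hxU := hCU hxC
      have hx2 : x ≠ c2 k t := fun h => hc2 (h ▸ hxU)
      by_cases hy : ∃ y ∈ C, y ≠ x
      · obtain ⟨y, hyC, hyx⟩ := hy
        have hyU := hCU hyC
        have hy2 : y ≠ c2 k t := fun h => hc2 (h ▸ hyU)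
        have hadj : (pupa k t).Adj x y := hCcl hxC hyC fun h => hyx h.symm
        rcases adj_pos hk hx2 hy2 hadj with h | h
        · rcases Nat.even_or_odd (dd P (pos k t x)) with he | ho
          · exact ⟨x, ⟨hxU, he⟩, hxC⟩
          · refine ⟨y, ⟨hyU, ?_⟩, hyC⟩
            rw [h, dd_succ_of (hPx x hxU)]
            exact Odd.add_one ho
        · rcases Nat.even_or_odd (dd P (pos k t y)) with he | ho
          · exact ⟨y, ⟨hyU, he⟩, hyC⟩
          · refine ⟨x, ⟨hxU, ?_⟩, hxC⟩
            rw [h, dd_succ_of (hPx y hyU)]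
            exact Odd.add_one ho
      · push_neg at hy
        have hiso : ∀ w ∈ U, ¬ (pupa k t).Adj x w := by
          intro w hw hadj
          have hD := hCmax (insert w C) (Set.insert_subset hw hCU)
            (SimpleGraph.isClique_insert.2 ⟨hCcl, fun z hz hne => by
              rw [hy z hz]
              exact hadj.symm⟩)
            (Set.subset_insert _ _)
          have hwC : w ∈ C := by rw [← hD]; exact Set.mem_insert _ _
          rw [hy w hwC] at hadj
          exact hadj.ne rfl
        have hdd : dd P (pos k t x) = 0 := by
          cases hpx : pos k t x with
          | zero => rfl
          | succ j =>
            have hjlt : j < t + k := by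
              have := pos_le hk x
              omega
            have hnp : ¬ P j := by
              intro hp
              apply hiso _ hp
              have hx' : x = vtx k t (j + 1) := by rw [← hpx, vtx_pos hk]
              rw [hx']
              exact (adj_succ hk hjlt).symm
            exact dd_succ_not hnp
        exact ⟨x, ⟨hxU, by rw [hdd]; exact Even.zero⟩, hxC⟩
end

section
/- Let P be a pupa with head v. Then v is unwanted in P: v belongs to no strong stable set of P. -/
open SimpleGraph

section PupaAux

variable {k t : ℕ}

private lemma znz (hk : 4 ≤ k) {n : ℕ} (h0 : 0 < n) (hn : n < k) : (n : ZMod k) ≠ 0 := by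
  rw [Ne, ZMod.natCast_eq_zero_iff]
  intro h
  have := Nat.le_of_dvd h0 h
  omega

private lemma pcast_inj {a b : ℕ} (ha : a < k) (hb : b < k) :
    ((a : ZMod k) = (b : ZMod k)) ↔ a = b := by
  rw [ZMod.natCast_eq_natCast_iff', Nat.mod_eq_of_lt ha, Nat.mod_eq_of_lt hb]

private lemma pmem (S : Set (PupaV k t)) {a b : ℕ} (ha : a < t) (hb : b < t) (hab : a = b)
    (h : some (Sum.inr (⟨a, ha⟩ : Fin t)) ∈ S) : some (Sum.inr (⟨b, hb⟩ : Fin t)) ∈ S := by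
  subst hab; exact h

private lemma c_adj {a b : ℕ} (ha : a < k) (hb : b < k) (hab : b = a + 1) :
    (pupa k t).Adj (some (Sum.inl (a : ZMod k))) (some (Sum.inl (b : ZMod k))) := by
  subst hab
  simp only [pupa, SimpleGraph.fromRel_adj, pupaRel]
  refine ⟨?_, Or.inl (by push_cast; ring)⟩
  intro hEq
  rw [Option.some.injEq, Sum.inl.injEq, pcast_inj ha hb] at hEq
  omega

private lemma edge_max (hk : 4 ≤ k) (i : ZMod k) (hi : i ≠ 0) :
    IsMaxClique (pupa k t) {some (Sum.inl i), some (Sum.inl (i + 1))} := by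
  have h1 : (1 : ZMod k) ≠ 0 := by
    have := znz (k := k) hk (n := 1) one_pos (by omega); simpa using this
  have h2 : (2 : ZMod k) ≠ 0 := by
    have := znz (k := k) hk (n := 2) (by omega) (by omega); simpa using this
  have h3 : (3 : ZMod k) ≠ 0 := by
    have := znz (k := k) hk (n := 3) (by omega) (by omega); simpa using this
  have hne : i ≠ i + 1 := fun h => h1 (by linear_combination -h)
  constructor
  · rw [SimpleGraph.isClique_pair]
    intro _
    simp only [pupa, SimpleGraph.fromRel_adj, pupaRel]
    exact ⟨by simpa using hne, by simp⟩
  · intro D hD hCD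
    refine Set.Subset.antisymm (fun w hw => ?_) hCD
    have key : ∀ x ∈ ({some (Sum.inl i), some (Sum.inl (i + 1))} : Set (PupaV k t)),
        w = x ∨ (pupa k t).Adj w x := fun x hx =>
      (eq_or_ne w x).imp id fun h => hD hw (hCD hx) h
    have hx := key (some (Sum.inl i)) (by simp)
    have hy := key (some (Sum.inl (i + 1))) (by simp)
    rcases w with _ | j | a
    · exfalso
      rcases hx with h | h
      · simp at h
      rcases hy with h' | h'
      · simp at h'
      simp [pupa, SimpleGraph.fromRel_adj, pupaRel] at h h'
      rcases h with ⟨-, h⟩ | h <;> rcases h' with ⟨-, h'⟩ | h'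
      · exact hi h
      · exact hi h
      · exact h2 (by linear_combination h' - h)
      · exact h1 (by linear_combination h' - h)
    · rcases hx with h | h
      · rw [h]; simp
      rcases hy with h' | h'
      · rw [h']; simp
      simp [pupa, SimpleGraph.fromRel_adj, pupaRel] at h h'
      obtain ⟨-, h⟩ := h
      obtain ⟨-, h'⟩ := h'
      simp only [Set.mem_insert_iff, Set.mem_singleton_iff, Option.some.injEq, Sum.inl.injEq]
      rcases h with h | h
      · rcases h' with h' | h'
        · left; linear_combination -h'
        · exact absurd (h3 (by linear_combination -h - h')) (fun hh => hh)
      · right; exact h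
    · exfalso
      rcases hx with h | h
      · simp at h
      rcases hy with h' | h'
      · simp at h'
      simp [pupa, SimpleGraph.fromRel_adj, pupaRel] at h h'
      rcases h with ⟨-, h⟩ | h <;> rcases h' with ⟨-, h'⟩ | h'
      · exact hi h
      · exact hi h
      · exact h2 (by linear_combination h' - h)
      · exact h1 (by linear_combination h' - h)

private lemma tri_max (a : ℕ) (ha : a + 1 < t) :
    IsMaxClique (pupa k t)
      {some (Sum.inr (⟨a, by omega⟩ : Fin t)), some (Sum.inr (⟨a + 1, ha⟩ : Fin t)),
        some (Sum.inl (1 : ZMod k))} := by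
  constructor
  · intro x hx y hy hxy
    simp only [Set.mem_insert_iff, Set.mem_singleton_iff] at hx hy
    rcases hx with rfl | rfl | rfl <;> rcases hy with rfl | rfl | rfl <;>
      first
        | exact absurd rfl hxy
        | (simp [pupa, SimpleGraph.fromRel_adj, pupaRel, Fin.ext_iff]; try omega)
  · intro D hD hCD
    refine Set.Subset.antisymm (fun w hw => ?_) hCD
    have key : ∀ x ∈ ({some (Sum.inr (⟨a, by omega⟩ : Fin t)),
        some (Sum.inr (⟨a + 1, ha⟩ : Fin t)),
        some (Sum.inl (1 : ZMod k))} : Set (PupaV k t)),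
        w = x ∨ (pupa k t).Adj w x := fun x hx =>
      (eq_or_ne w x).imp id fun h => hD hw (hCD hx) h
    have hx := key (some (Sum.inr (⟨a, by omega⟩ : Fin t))) (by simp)
    have hy := key (some (Sum.inr (⟨a + 1, ha⟩ : Fin t))) (by simp)
    rcases w with _ | j | b
    · exfalso
      rcases hy with h | h
      · simp at h
      simp [pupa, SimpleGraph.fromRel_adj, pupaRel] at h
    · rcases hx with h | h
      · simp at h
      simp [pupa, SimpleGraph.fromRel_adj, pupaRel] at h
      rcases h with ⟨h1', -⟩ | rfl
      · omega
      · simp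
    · rcases hx with h | h
      · rw [h]; simp
      rcases hy with h' | h'
      · rw [h']; simp
      simp [pupa, SimpleGraph.fromRel_adj, pupaRel, Fin.ext_iff] at h h'
      simp only [Set.mem_insert_iff, Set.mem_singleton_iff, Option.some.injEq, Sum.inr.injEq,
        Fin.ext_iff]
      omega

end PupaAux

theorem pupa_head_unwanted (k t : ℕ) (hk : 4 ≤ k) (hke : Even k) (hte : Even t)
    (S : Set (PupaV k t)) (hS : StrongStable (pupa k t) S) :
    none ∉ S := by
  intro hv
  obtain ⟨hstab, hmeet⟩ := hS
  obtain ⟨mk, hmk⟩ := hke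
  obtain ⟨mt, hmt⟩ := hte
  have hC1 : some (Sum.inl (1 : ZMod k)) ∉ S := fun h =>
    hstab hv h (by simp [pupa, SimpleGraph.fromRel_adj, pupaRel])
  have hpath : ∀ j : ℕ, ∀ h : 2 * j + 1 < t, some (Sum.inr (⟨2 * j + 1, h⟩ : Fin t)) ∈ S := by
    intro j
    induction j with
    | zero =>
      intro h
      have hP0 : some (Sum.inr (⟨0, by omega⟩ : Fin t)) ∉ S := fun h' =>
        hstab hv h' (by simp [pupa, SimpleGraph.fromRel_adj, pupaRel])
      obtain ⟨x, hxS, hxm⟩ := hmeet _ (tri_max (k := k) 0 (by omega)) ⟨_, Set.mem_insert _ _⟩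
      simp only [Set.mem_insert_iff, Set.mem_singleton_iff] at hxm
      rcases hxm with rfl | rfl | rfl
      · exact absurd hxS hP0
      · exact pmem S _ _ (by omega) hxS
      · exact absurd hxS hC1
    | succ j ih =>
      intro h
      have hprev := ih (by omega)
      have hnot : some (Sum.inr (⟨2 * j + 2, by omega⟩ : Fin t)) ∉ S := fun h' =>
        hstab hprev h' (by simp [pupa, SimpleGraph.fromRel_adj, pupaRel, Fin.ext_iff]; try omega)
      obtain ⟨x, hxS, hxm⟩ := hmeet _ (tri_max (k := k) (2 * j + 2) (by omega))
        ⟨_, Set.mem_insert _ _⟩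
      simp only [Set.mem_insert_iff, Set.mem_singleton_iff] at hxm
      rcases hxm with rfl | rfl | rfl
      · exact absurd hxS hnot
      · exact pmem S _ _ (by omega) hxS
      · exact absurd hxS hC1
  have hC0 : some (Sum.inl (0 : ZMod k)) ∉ S := by
    rcases Nat.eq_zero_or_pos t with ht0 | htpos
    · exact fun h => hstab hv h (by simp [pupa, SimpleGraph.fromRel_adj, pupaRel, ht0])
    · have hlast := hpath ((t - 2) / 2) (by omega)
      have hlast' : some (Sum.inr (⟨t - 1, by omega⟩ : Fin t)) ∈ S :=
        pmem S _ _ (by omega) hlast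
      exact fun h => hstab hlast' h (by simp [pupa, SimpleGraph.fromRel_adj, pupaRel])
  have hhole : ∀ j : ℕ, 2 * j + 1 < k → some (Sum.inl ((2 * j + 1 : ℕ) : ZMod k)) ∉ S := by
    intro j
    induction j with
    | zero => intro _; simpa using hC1
    | succ j ih =>
      intro h
      have hprev := ih (by omega)
      obtain ⟨x, hxS, hxm⟩ := hmeet _
        (edge_max (t := t) hk ((2 * j + 1 : ℕ) : ZMod k) (znz hk (by omega) (by omega)))
        ⟨_, Set.mem_insert _ _⟩
      simp only [Set.mem_insert_iff, Set.mem_singleton_iff] at hxm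
      rcases hxm with rfl | rfl
      · exact absurd hxS hprev
      · intro hmem
        have hcast : ((2 * j + 1 : ℕ) : ZMod k) + 1 = ((2 * j + 2 : ℕ) : ZMod k) := by
          push_cast; ring
        rw [hcast] at hxS
        have hcast2 : (2 * (j + 1) + 1 : ℕ) = (2 * j + 3 : ℕ) := by ring
        rw [hcast2] at hmem
        exact hstab hxS hmem (c_adj (by omega) (by omega) (by omega))
  have hk1 := hhole ((k - 2) / 2) (by omega)
  rw [show 2 * ((k - 2) / 2) + 1 = k - 1 from by omega] at hk1
  obtain ⟨x, hxS, hxm⟩ := hmeet _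
    (edge_max (t := t) hk ((k - 1 : ℕ) : ZMod k) (znz hk (by omega) (by omega)))
    ⟨_, Set.mem_insert _ _⟩
  simp only [Set.mem_insert_iff, Set.mem_singleton_iff] at hxm
  rcases hxm with rfl | rfl
  · exact absurd hxS hk1
  · have hcast : ((k - 1 : ℕ) : ZMod k) + 1 = (0 : ZMod k) := by
      rw [show ((k - 1 : ℕ) : ZMod k) + 1 = ((k - 1 + 1 : ℕ) : ZMod k) from by push_cast; ring,
        show k - 1 + 1 = k from by omega, ZMod.natCast_self]
    rw [hcast] at hxS
    exact hC0 hxS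
end

section
/- Let G be a graph containing an induced cycle C = c_1-c_2-...-c_k-c_1 of even length k ≥ 4 such that each edge {c_i, c_{i+1}} for 2 ≤ i ≤ k-1, as well as {c_k, c_1}, is a maximal clique of G. Then every strong stable set S of G contains exactly one of c_1, c_2. -/
open SimpleGraph

/-- `c 0, c 1, …, c (k-1)` play the roles of `c_1, c_2, …, c_k` in the paper;
the maximal-clique hypothesis covers exactly the cycle edges other than `{c_1, c_2}`. -/
theorem even_hole_exactly_one (V : Type*) [Fintype V] (G : SimpleGraph V)
    (k : ℕ) (hk : 4 ≤ k) (hke : Even k)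
    (c : ZMod k → V) (hinj : Function.Injective c)
    (hadj : ∀ i j : ZMod k, G.Adj (c i) (c j) ↔ (i ≠ j ∧ (j = i + 1 ∨ i = j + 1)))
    (hmax : ∀ i : ZMod k, i ≠ 0 → IsMaxClique G {c i, c (i + 1)})
    (S : Set V) (hS : StrongStable G S) :
    (c 0 ∈ S ∧ c 1 ∉ S) ∨ (c 0 ∉ S ∧ c 1 ∈ S) := by
  haveI : NeZero k := ⟨by omega⟩
  have hone : (1 : ZMod k) ≠ 0 := by
    intro h
    have : ((1 : ℕ) : ZMod k).val = 1 := ZMod.val_natCast_of_lt (by omega)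
    simp [h] at this
  -- step: for i ≠ 0, exactly one of c i, c (i+1) in S
  have step : ∀ i : ZMod k, i ≠ 0 → (c (i + 1) ∈ S ↔ c i ∉ S) := by
    intro i hi
    have hadj' : G.Adj (c i) (c (i + 1)) := by
      rw [hadj]
      refine ⟨fun h => hone (by linear_combination -h), Or.inl rfl⟩
    have hhit := hS.2 _ (hmax i hi) ⟨c i, by simp⟩
    obtain ⟨x, hxS, hxC⟩ := hhit
    have hnotboth : ¬ (c i ∈ S ∧ c (i + 1) ∈ S) := by
      rintro ⟨h1, h2⟩; exact hS.1 h1 h2 hadj'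
    rcases hxC with h | h <;> subst h
    · constructor
      · intro h2 h1; exact hnotboth ⟨h1, h2⟩
      · intro h; exact (h hxS).elim
    · constructor
      · intro _ h1; exact hnotboth ⟨h1, hxS⟩
      · intro _; exact hxS
  -- nonzero lemma
  have hnz : ∀ n : ℕ, n + 1 < k → ((1 : ZMod k) + n ≠ 0) := by
    intro n hn h
    have : (((n + 1 : ℕ)) : ZMod k) = 0 := by push_cast; linear_combination h
    have hv : (((n + 1 : ℕ)) : ZMod k).val = n + 1 := ZMod.val_natCast_of_lt hn
    rw [this] at hv
    simp at hv
  -- alternation along the path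
  have alt : ∀ n : ℕ, n ≤ k - 1 → (c (1 + n) ∈ S ↔ (c 1 ∈ S ↔ Even n)) := by
    intro n
    induction n with
    | zero => simp
    | succ m ih =>
      intro hm
      have hm' : m ≤ k - 1 := by omega
      have h0 : (1 : ZMod k) + m ≠ 0 := hnz m (by omega)
      have := step _ h0
      have hcast : (1 : ZMod k) + (m + 1 : ℕ) = (1 + (m : ZMod k)) + 1 := by
        push_cast; ring
      rw [hcast, this, ih hm', Nat.even_add_one]
      by_cases h1 : c 1 ∈ S <;> by_cases h2 : Even m <;> simp [h1, h2]
  have hkey := alt (k - 1) le_rfl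
  have hcast0 : (1 : ZMod k) + ((k - 1 : ℕ) : ZMod k) = 0 := by
    have : ((k : ℕ) : ZMod k) = 0 := ZMod.natCast_self k
    have hk1 : (k - 1 : ℕ) + 1 = k := by omega
    calc (1 : ZMod k) + ((k - 1 : ℕ) : ZMod k) = (((k - 1 : ℕ) + 1 : ℕ) : ZMod k) := by
          push_cast; ring
      _ = ((k : ℕ) : ZMod k) := by rw [hk1]
      _ = 0 := this
  rw [hcast0] at hkey
  have hodd : ¬ Even (k - 1) := by
    rcases hke with ⟨m, hm⟩
    rintro ⟨j, hj⟩
    omega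
  rw [hkey]
  by_cases h1 : c 1 ∈ S <;> simp [h1, hodd]
end

section
/- Let G be a graph containing an induced path v_1-r_1-r_2-...-r_n-v_2 such that each pair {v_1, r_1}, {r_1, r_2}, ..., {r_{n-1}, r_n}, {r_n, v_2} is a maximal clique of G, the path v_1-r_1-...-r_n-v_2 has odd length, and no strong stable set of G contains v_1 or v_2. Then G has no strong stable set. -/
open SimpleGraph

/-- `q 0 = v_1`, `q (i+1) = r_{i+1}` for `i < n`, and `q (n+1) = v_2`; the path
`v_1-r_1-…-r_n-v_2` has `n+1` edges, and being odd means `n` is even. -/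
theorem odd_path_forced_ends_no_sss (V : Type*) [Fintype V] (G : SimpleGraph V)
    (n : ℕ) (hn : Even n)
    (q : Fin (n + 2) → V) (hinj : Function.Injective q)
    (hadj : ∀ i j : Fin (n + 2),
      G.Adj (q i) (q j) ↔ ((i : ℕ) + 1 = (j : ℕ) ∨ (j : ℕ) + 1 = (i : ℕ)))
    (hmax : ∀ i : Fin (n + 1), IsMaxClique G {q i.castSucc, q i.succ})
    (hends : ∀ S : Set V, StrongStable G S → q 0 ∉ S ∧ q (Fin.last (n + 1)) ∉ S) :
    ¬ ∃ S : Set V, StrongStable G S := by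
  rintro ⟨S, hS⟩
  obtain ⟨hv1, hv2⟩ := hends S hS
  obtain ⟨hstab, hclq⟩ := hS
  have key : ∀ k : ℕ, (hk : k ≤ n + 1) → (q ⟨k, by omega⟩ ∈ S ↔ Odd k) := by
    intro k
    induction k with
    | zero =>
      intro _
      have h0 : (⟨0, by omega⟩ : Fin (n + 2)) = 0 := rfl
      rw [h0]
      simp [hv1, Nat.odd_iff]
    | succ m ih =>
      intro hk
      have hm := ih (by omega)
      have hmn : m < n + 1 := by omega
      set i : Fin (n + 1) := ⟨m, hmn⟩ with hi
      have hcast : i.castSucc = (⟨m, by omega⟩ : Fin (n + 2)) := rfl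
      have hsucc : i.succ = (⟨m + 1, by omega⟩ : Fin (n + 2)) := rfl
      have hA : G.Adj (q ⟨m, by omega⟩) (q ⟨m + 1, by omega⟩) := by
        rw [hadj]; left; rfl
      by_cases hodd : Odd m
      · have hin : q (⟨m, by omega⟩ : Fin (n + 2)) ∈ S := hm.mpr hodd
        constructor
        · intro hin2
          exact absurd hA (hstab hin hin2)
        · intro h
          exact absurd h (by simpa [Nat.odd_iff, Nat.succ_mod_two_eq_one_iff] using
            (Nat.odd_iff.mp hodd))
      · have hnotin : q (⟨m, by omega⟩ : Fin (n + 2)) ∉ S := fun h => hodd (hm.mp h)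
        obtain ⟨x, hxS, hxC⟩ := hclq _ (hmax i)
          ⟨q i.castSucc, by simp [Set.mem_insert_iff]⟩
        rw [hcast, hsucc] at hxC
        rcases hxC with h | h
        · exact absurd (h ▸ hxS) hnotin
        · constructor
          · intro _
            rw [Nat.odd_add_one]
            exact fun h' => hodd h'
          · intro _
            rw [Set.mem_singleton_iff] at h
            exact h ▸ hxS
  have hlast : q (Fin.last (n + 1)) ∈ S := by
    have := (key (n + 1) le_rfl).mpr (by
      rw [Nat.odd_add_one]; exact Nat.not_odd_iff_even.mpr hn)
    exact this
  exact hv2 hlast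
end

section
/- Let G be the graph obtained by taking two disjoint pupas with heads v_1 and v_2 respectively, and joining v_1 to v_2 by an internally disjoint induced path v_1-r_1-...-r_n-v_2 of odd length (with no other edges between the pupas or from the path to the pupas except at v_1 and v_2). Then G has no strong stable set. -/
open SimpleGraph

/-- Join two graphs (given by relations `ra`, `rb`) by an induced path
`a0-r_1-…-r_n-b0` of length `n+1` from the vertex `a0` of the first graph to the
vertex `b0` of the second graph, with no other edges between the parts. -/
def joinRel {A B : Type*} (ra : A → A → Prop) (rb : B → B → Prop) (a0 : A) (b0 : B)
    (n : ℕ) : (A ⊕ (Fin n ⊕ B)) → (A ⊕ (Fin n ⊕ B)) → Prop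
  | Sum.inl x, Sum.inl y => ra x y
  | Sum.inr (Sum.inr x), Sum.inr (Sum.inr y) => rb x y
  | Sum.inr (Sum.inl i), Sum.inr (Sum.inl j) => (j : ℕ) = (i : ℕ) + 1
  | Sum.inl x, Sum.inr (Sum.inl i) => x = a0 ∧ (i : ℕ) = 0
  | Sum.inr (Sum.inl i), Sum.inr (Sum.inr y) => (i : ℕ) = n - 1 ∧ y = b0
  | Sum.inl x, Sum.inr (Sum.inr y) => n = 0 ∧ x = a0 ∧ y = b0
  | _, _ => False

/-- Two disjoint pupas whose heads are joined by an induced path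
`v_1-r_1-…-r_n-v_2` of length `n+1`; the path is odd, i.e. `n` is even. -/
def pupaJoin (k₁ t₁ k₂ t₂ n : ℕ) :
    SimpleGraph (PupaV k₁ t₁ ⊕ (Fin n ⊕ PupaV k₂ t₂)) :=
  SimpleGraph.fromRel (joinRel (pupaRel k₁ t₁) (pupaRel k₂ t₂) none none n)

section Aux

lemma hit_edge {V : Type*} {G : SimpleGraph V} {S : Set V} (hS : StrongStable G S)
    {a b : V} (hab : G.Adj a b)
    (h : ∀ z, G.Adj a z → G.Adj b z → False) : a ∈ S ∨ b ∈ S := by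
  have hcl : G.IsClique {a, b} := by
    intro x hx y hy hxy
    simp only [Set.mem_insert_iff, Set.mem_singleton_iff] at hx hy
    rcases hx with rfl|rfl <;> rcases hy with rfl|rfl
    · exact absurd rfl hxy
    · exact hab
    · exact hab.symm
    · exact absurd rfl hxy
  have hmax : IsMaxClique G {a, b} := by
    refine ⟨hcl, ?_⟩
    intro D hD hsub
    apply Set.Subset.antisymm _ hsub
    intro d hd
    simp only [Set.mem_insert_iff, Set.mem_singleton_iff]
    by_contra hcon
    push_neg at hcon
    exact h d (hD (hsub (by simp)) hd (Ne.symm hcon.1)) (hD (hsub (by simp)) hd (Ne.symm hcon.2))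
  obtain ⟨x, hxS, hx⟩ := hS.2 _ hmax ⟨a, by simp⟩
  simp only [Set.mem_insert_iff, Set.mem_singleton_iff] at hx
  rcases hx with rfl|rfl
  · exact Or.inl hxS
  · exact Or.inr hxS

lemma hit_triangle {V : Type*} {G : SimpleGraph V} {S : Set V} (hS : StrongStable G S)
    {a b c : V} (hab : G.Adj a b) (hac : G.Adj a c) (hbc : G.Adj b c)
    (h : ∀ z, G.Adj a z → G.Adj b z → z = c) : a ∈ S ∨ b ∈ S ∨ c ∈ S := by
  have hcl : G.IsClique {a, b, c} := by
    intro x hx y hy hxy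
    simp only [Set.mem_insert_iff, Set.mem_singleton_iff] at hx hy
    rcases hx with rfl|rfl|rfl <;> rcases hy with rfl|rfl|rfl <;>
      first
        | exact absurd rfl hxy
        | exact hab | exact hab.symm | exact hac | exact hac.symm | exact hbc | exact hbc.symm
  have hmax : IsMaxClique G {a, b, c} := by
    refine ⟨hcl, ?_⟩
    intro D hD hsub
    apply Set.Subset.antisymm _ hsub
    intro d hd
    simp only [Set.mem_insert_iff, Set.mem_singleton_iff]
    by_contra hcon
    push_neg at hcon
    exact hcon.2.2 (h d (hD (hsub (by simp)) hd (Ne.symm hcon.1))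
      (hD (hsub (by simp)) hd (Ne.symm hcon.2.1)))
  obtain ⟨x, hxS, hx⟩ := hS.2 _ hmax ⟨a, by simp⟩
  simp only [Set.mem_insert_iff, Set.mem_singleton_iff] at hx
  rcases hx with rfl|rfl|rfl
  · exact Or.inl hxS
  · exact Or.inr (Or.inl hxS)
  · exact Or.inr (Or.inr hxS)

/-- Core lemma: if a pupa is embedded in `G` such that all non-head vertices have
all of their `G`-neighbours inside the image, then the head of the pupa cannot
belong to any strong stable set of `G`. -/
lemma pupa_head_not_mem {k t : ℕ} (hk : 4 ≤ k) (hke : Even k) (hte : Even t)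
    {V : Type*} {G : SimpleGraph V} {S : Set V} (hS : StrongStable G S)
    (f : PupaV k t → V)
    (hadj : ∀ x y, G.Adj (f x) (f y) ↔ (pupa k t).Adj x y)
    (hclosed : ∀ x w, x ≠ none → G.Adj (f x) w → ∃ z, w = f z) :
    f none ∉ S := by
  intro hv
  have key : ∀ a b : ℕ, a < b → b ≤ a + 3 → ((a : ℕ) : ZMod k) = ((b : ℕ) : ZMod k) → False := by
    intro a b h1 h2 heq
    rw [ZMod.natCast_eq_natCast_iff] at heq
    have hd := (Nat.modEq_iff_dvd' (le_of_lt h1)).mp heq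
    have := Nat.le_of_dvd (by omega) hd
    omega
  have key1 : ∀ a b : ℕ, a < k → b < k → ((a : ℕ) : ZMod k) = ((b : ℕ) : ZMod k) → a = b := by
    intro a b ha hb heq
    rwa [ZMod.natCast_eq_natCast_iff, Nat.ModEq, Nat.mod_eq_of_lt ha, Nat.mod_eq_of_lt hb] at heq
  have cast0 : ∀ a : ℕ, a < k → ((a : ℕ) : ZMod k) = 0 → a = 0 := by
    intro a ha h
    exact key1 a 0 ha (by omega) (by exact_mod_cast h)
  have cast1 : ∀ a : ℕ, a < k → ((a : ℕ) : ZMod k) = 1 → a = 1 := by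
    intro a ha h
    exact key1 a 1 ha (by omega) (by exact_mod_cast h)
  have nstab : ∀ x y : PupaV k t, (pupa k t).Adj x y → f x ∈ S → f y ∈ S → False :=
    fun x y hxy hx hy => hS.1 hx hy ((hadj x y).2 hxy)
  have hitE : ∀ a b : PupaV k t, a ≠ none → (pupa k t).Adj a b →
      (∀ z, (pupa k t).Adj a z → (pupa k t).Adj b z → False) → f a ∈ S ∨ f b ∈ S := by
    intro a b ha hab hcn
    apply hit_edge hS ((hadj a b).2 hab)
    intro w hwa hwb
    obtain ⟨z, rfl⟩ := hclosed a w ha hwa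
    exact hcn z ((hadj a z).1 hwa) ((hadj b z).1 hwb)
  have hitT : ∀ a b c : PupaV k t, a ≠ none → (pupa k t).Adj a b → (pupa k t).Adj a c →
      (pupa k t).Adj b c →
      (∀ z, (pupa k t).Adj a z → (pupa k t).Adj b z → z = c) →
      f a ∈ S ∨ f b ∈ S ∨ f c ∈ S := by
    intro a b c ha hab hac hbc hcn
    apply hit_triangle hS ((hadj a b).2 hab) ((hadj a c).2 hac) ((hadj b c).2 hbc)
    intro w hwa hwb
    obtain ⟨z, rfl⟩ := hclosed a w ha hwa
    exact congrArg f (hcn z ((hadj a z).1 hwa) ((hadj b z).1 hwb))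
  -- v is adjacent to c₂
  have hc2adj : (pupa k t).Adj none (some (Sum.inl ((1:ℕ) : ZMod k))) := by
    simp only [pupa, SimpleGraph.fromRel_adj, pupaRel]
    exact ⟨by simp, Or.inl (Or.inr (by push_cast; ring))⟩
  have hc2 : f (some (Sum.inl ((1:ℕ) : ZMod k))) ∉ S := fun h => nstab _ _ hc2adj hv h
  -- hole edges
  have holeAdj : ∀ a : ℕ, a < k →
      (pupa k t).Adj (some (Sum.inl ((a:ℕ) : ZMod k))) (some (Sum.inl ((a+1:ℕ) : ZMod k))) := by
    intro a ha
    simp only [pupa, SimpleGraph.fromRel_adj, pupaRel, ne_eq, Option.some.injEq, Sum.inl.injEq]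
    constructor
    · intro h
      exact key a (a+1) (by omega) (by omega) h
    · exact Or.inl (by push_cast; ring)
  have holeCN : ∀ a : ℕ, 0 < a → a < k → ∀ z,
      (pupa k t).Adj (some (Sum.inl ((a:ℕ) : ZMod k))) z →
      (pupa k t).Adj (some (Sum.inl ((a+1:ℕ) : ZMod k))) z → False := by
    intro a ha0 hak z h1 h2
    rcases z with _ | (j | b) <;>
      simp only [pupa, SimpleGraph.fromRel_adj, pupaRel, ne_eq, Option.some.injEq,
        Sum.inl.injEq, Sum.inr.injEq, false_or, or_false] at h1 h2
    · rcases h1.2 with ⟨_, h1e⟩ | h1e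
      · exact absurd (cast0 a hak h1e) (by omega)
      · have ha1 : a = 1 := cast1 a hak h1e
        subst ha1
        rcases h2.2 with ⟨_, h2e⟩ | h2e
        · exact absurd (cast0 2 (by omega) h2e) (by omega)
        · exact absurd (cast1 2 (by omega) h2e) (by omega)
    · obtain ⟨-, h1e⟩ := h1
      obtain ⟨-, h2e⟩ := h2
      rcases h1e with h1e | h1e <;> rcases h2e with h2e | h2e
      · refine key a (a+1) (by omega) (by omega) ?_
        push_cast at h1e h2e ⊢
        linear_combination h2e - h1e
      · refine key a (a+1) (by omega) (by omega) ?_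
        push_cast at h1e h2e ⊢
        linear_combination h1e + h2e
      · refine key a (a+3) (by omega) (by omega) ?_
        push_cast at h1e h2e ⊢
        linear_combination h1e + h2e
      · refine key a (a+1) (by omega) (by omega) ?_
        push_cast at h1e h2e ⊢
        linear_combination h1e - h2e
    · rcases h1.2 with ⟨_, h1e⟩ | h1e
      · exact absurd (cast0 a hak h1e) (by omega)
      · have ha1 : a = 1 := cast1 a hak h1e
        subst ha1
        rcases h2.2 with ⟨_, h2e⟩ | h2e
        · exact absurd (cast0 2 (by omega) h2e) (by omega)
        · exact absurd (cast1 2 (by omega) h2e) (by omega)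
  -- hole induction
  have hole : ∀ j : ℕ, 1 ≤ j → 2*j ≤ k → f (some (Sum.inl ((2*j : ℕ) : ZMod k))) ∈ S := by
    intro j hj
    induction j, hj using Nat.le_induction with
    | base =>
      intro h2k
      have := hitE (some (Sum.inl ((1:ℕ) : ZMod k))) (some (Sum.inl ((2:ℕ) : ZMod k)))
        (by simp) (holeAdj 1 (by omega)) (holeCN 1 (by omega) (by omega))
      rcases this with h | h
      · exact absurd h hc2
      · exact h
    | succ j hj ih =>
      intro h2k
      have hprev : f (some (Sum.inl ((2*j : ℕ) : ZMod k))) ∈ S := ih (by omega)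
      have hmid : f (some (Sum.inl ((2*j+1 : ℕ) : ZMod k))) ∉ S := fun h =>
        nstab _ _ (holeAdj (2*j) (by omega)) hprev h
      have := hitE (some (Sum.inl ((2*j+1 : ℕ) : ZMod k))) (some (Sum.inl ((2*j+2 : ℕ) : ZMod k)))
        (by simp) (holeAdj (2*j+1) (by omega)) (holeCN (2*j+1) (by omega) (by omega))
      rcases this with h | h
      · exact absurd h hmid
      · have heq : (2*(j+1) : ℕ) = (2*j+2 : ℕ) := by ring
        rw [heq]
        exact h
  have hc1 : f (some (Sum.inl ((0:ℕ) : ZMod k))) ∈ S := by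
    obtain ⟨m, hm⟩ := hke
    have hm1 : 1 ≤ m := by omega
    have := hole m hm1 (by omega)
    have heq : ((2*m : ℕ) : ZMod k) = ((0:ℕ) : ZMod k) := by
      rw [ZMod.natCast_eq_natCast_iff]
      have : k ∣ 2*m - 0 := ⟨1, by omega⟩
      exact (Nat.modEq_iff_dvd' (by omega)).mpr this |>.symm
    rwa [heq] at this
  rcases Nat.eq_zero_or_pos t with ht0 | htpos
  · -- t = 0 : v is adjacent to c₁
    subst ht0
    have hadj01 : (pupa k 0).Adj none (some (Sum.inl ((0:ℕ) : ZMod k))) := by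
      simp only [pupa, SimpleGraph.fromRel_adj, pupaRel]
      exact ⟨by simp, Or.inl (Or.inl ⟨by trivial, by push_cast; ring⟩)⟩
    exact nstab _ _ hadj01 hv hc1
  · have ht2 : 2 ≤ t := by
      obtain ⟨m, hm⟩ := hte; omega
    -- path adjacencies
    have pAdj : ∀ b : ℕ, ∀ hb : b + 1 < t,
        (pupa k t).Adj (some (Sum.inr (⟨b, by omega⟩ : Fin t)))
          (some (Sum.inr (⟨b+1, hb⟩ : Fin t))) := by
      intro b hb
      simp only [pupa, SimpleGraph.fromRel_adj, pupaRel, ne_eq, Option.some.injEq,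
        Sum.inr.injEq, Fin.mk.injEq]
      exact ⟨by omega, Or.inl (by simp)⟩
    have c2pAdj : ∀ b : Fin t,
        (pupa k t).Adj (some (Sum.inl ((1:ℕ) : ZMod k))) (some (Sum.inr b)) := by
      intro b
      simp only [pupa, SimpleGraph.fromRel_adj, pupaRel]
      refine ⟨by simp, Or.inr (Or.inr (by push_cast; ring))⟩
    have vp0Adj : (pupa k t).Adj none (some (Sum.inr (⟨0, by omega⟩ : Fin t))) := by
      simp only [pupa, SimpleGraph.fromRel_adj, pupaRel]
      exact ⟨by simp, Or.inl (by simp)⟩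
    have pathCN : ∀ b : ℕ, ∀ hb : b + 1 < t, ∀ z,
        (pupa k t).Adj (some (Sum.inr (⟨b, by omega⟩ : Fin t))) z →
        (pupa k t).Adj (some (Sum.inr (⟨b+1, hb⟩ : Fin t))) z →
        z = some (Sum.inl ((1:ℕ) : ZMod k)) := by
      intro b hb z h1 h2
      rcases z with _ | (j | b'') <;>
        simp only [pupa, SimpleGraph.fromRel_adj, pupaRel, ne_eq, Option.some.injEq,
          Sum.inl.injEq, Sum.inr.injEq, Fin.mk.injEq, false_or, or_false] at h1 h2
      · omega
      · obtain ⟨-, h1d⟩ := h1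
        obtain ⟨-, h2d⟩ := h2
        rcases h1d with ⟨hb1, hj⟩ | hj
        · rcases h2d with ⟨hb2, hj'⟩ | hj'
          · omega
          · subst hj'; norm_num
        · subst hj; norm_num
      · omega
    -- path induction
    have path : ∀ j : ℕ, ∀ hj : 2*j+1 < t, f (some (Sum.inr (⟨2*j+1, hj⟩ : Fin t))) ∈ S := by
      intro j
      induction j with
      | zero =>
        intro hj
        have hp0 : f (some (Sum.inr (⟨0, by omega⟩ : Fin t))) ∉ S := fun h =>
          nstab _ _ vp0Adj hv h
        have := hitT (some (Sum.inr (⟨0, by omega⟩ : Fin t)))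
          (some (Sum.inr (⟨1, by omega⟩ : Fin t))) (some (Sum.inl ((1:ℕ) : ZMod k)))
          (by simp) (pAdj 0 (by omega)) ((c2pAdj _).symm) ((c2pAdj _).symm)
          (pathCN 0 (by omega))
        rcases this with h | h | h
        · exact absurd h hp0
        · exact h
        · exact absurd h hc2
      | succ j ih =>
        intro hj
        have hprev : f (some (Sum.inr (⟨2*j+1, by omega⟩ : Fin t))) ∈ S := ih (by omega)
        have hmid : f (some (Sum.inr (⟨2*j+2, by omega⟩ : Fin t))) ∉ S := fun h =>
          nstab _ _ (pAdj (2*j+1) (by omega)) hprev h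
        have := hitT (some (Sum.inr (⟨2*j+2, by omega⟩ : Fin t)))
          (some (Sum.inr (⟨2*j+3, by omega⟩ : Fin t))) (some (Sum.inl ((1:ℕ) : ZMod k)))
          (by simp) (pAdj (2*j+2) (by omega)) ((c2pAdj _).symm) ((c2pAdj _).symm)
          (pathCN (2*j+2) (by omega))
        rcases this with h | h | h
        · exact absurd h hmid
        · have : (2*(j+1)+1 : ℕ) = (2*j+3 : ℕ) := by ring
          simp_rw [this]
          exact h
        · exact absurd h hc2
    -- conclusion
    obtain ⟨m, hm⟩ := hte
    have hm1 : 1 ≤ m := by omega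
    have ht1 : 2*(m-1)+1 < t := by omega
    have hpt : f (some (Sum.inr (⟨2*(m-1)+1, ht1⟩ : Fin t))) ∈ S := path (m-1) ht1
    have hlast : (pupa k t).Adj (some (Sum.inr (⟨2*(m-1)+1, ht1⟩ : Fin t)))
        (some (Sum.inl ((0:ℕ) : ZMod k))) := by
      simp only [pupa, SimpleGraph.fromRel_adj, pupaRel]
      refine ⟨by simp, Or.inl (Or.inl ⟨?_, by push_cast; ring⟩)⟩
      show (2*(m-1)+1 : ℕ) = t - 1
      omega
    exact nstab _ _ hlast hpt hc1

end Aux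

theorem two_pupas_odd_path_no_sss (k₁ t₁ k₂ t₂ n : ℕ)
    (hk₁ : 4 ≤ k₁) (hk₁e : Even k₁) (ht₁e : Even t₁)
    (hk₂ : 4 ≤ k₂) (hk₂e : Even k₂) (ht₂e : Even t₂)
    (hne : Even n) :
    ¬ ∃ S : Set (PupaV k₁ t₁ ⊕ (Fin n ⊕ PupaV k₂ t₂)),
      StrongStable (pupaJoin k₁ t₁ k₂ t₂ n) S := by
  rintro ⟨S, hS⟩
  -- left embedding
  have hadjL : ∀ x y : PupaV k₁ t₁,
      (pupaJoin k₁ t₁ k₂ t₂ n).Adj (Sum.inl x) (Sum.inl y) ↔ (pupa k₁ t₁).Adj x y := by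
    intro x y
    simp [pupaJoin, pupa, SimpleGraph.fromRel_adj, joinRel]
  have hclosedL : ∀ (x : PupaV k₁ t₁) (w : PupaV k₁ t₁ ⊕ (Fin n ⊕ PupaV k₂ t₂)),
      x ≠ none → (pupaJoin k₁ t₁ k₂ t₂ n).Adj (Sum.inl x) w → ∃ z, w = Sum.inl z := by
    intro x w hx hxw
    rcases w with x' | (i | y)
    · exact ⟨x', rfl⟩
    · exfalso
      simp only [pupaJoin, SimpleGraph.fromRel_adj, joinRel, false_or, or_false] at hxw
      exact hx hxw.2.1
    · exfalso
      simp only [pupaJoin, SimpleGraph.fromRel_adj, joinRel, false_or, or_false] at hxw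
      exact hx hxw.2.2.1
  have hv1 : Sum.inl (none : PupaV k₁ t₁) ∉ S :=
    pupa_head_not_mem hk₁ hk₁e ht₁e hS Sum.inl hadjL hclosedL
  -- right embedding
  have hadjR : ∀ x y : PupaV k₂ t₂,
      (pupaJoin k₁ t₁ k₂ t₂ n).Adj (Sum.inr (Sum.inr x)) (Sum.inr (Sum.inr y)) ↔
        (pupa k₂ t₂).Adj x y := by
    intro x y
    simp [pupaJoin, pupa, SimpleGraph.fromRel_adj, joinRel]
  have hclosedR : ∀ (x : PupaV k₂ t₂) (w : PupaV k₁ t₁ ⊕ (Fin n ⊕ PupaV k₂ t₂)),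
      x ≠ none → (pupaJoin k₁ t₁ k₂ t₂ n).Adj (Sum.inr (Sum.inr x)) w →
        ∃ z, w = Sum.inr (Sum.inr z) := by
    intro x w hx hxw
    rcases w with x' | (i | y)
    · exfalso
      simp only [pupaJoin, SimpleGraph.fromRel_adj, joinRel, false_or, or_false] at hxw
      exact hx hxw.2.2.2
    · exfalso
      simp only [pupaJoin, SimpleGraph.fromRel_adj, joinRel, false_or, or_false] at hxw
      exact hx hxw.2.2
    · exact ⟨y, rfl⟩
  have hv2 : Sum.inr (Sum.inr (none : PupaV k₂ t₂)) ∉ S :=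
    pupa_head_not_mem hk₂ hk₂e ht₂e hS (fun z => Sum.inr (Sum.inr z)) hadjR hclosedR
  rcases Nat.eq_zero_or_pos n with hn0 | hnpos
  · -- n = 0 : v₁ adjacent to v₂
    subst hn0
    have hadj12 : (pupaJoin k₁ t₁ k₂ t₂ 0).Adj (Sum.inl (none : PupaV k₁ t₁))
        (Sum.inr (Sum.inr (none : PupaV k₂ t₂))) := by
      simp [pupaJoin, SimpleGraph.fromRel_adj, joinRel]
    have hcn : ∀ z, (pupaJoin k₁ t₁ k₂ t₂ 0).Adj (Sum.inl (none : PupaV k₁ t₁)) z →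
        (pupaJoin k₁ t₁ k₂ t₂ 0).Adj (Sum.inr (Sum.inr (none : PupaV k₂ t₂))) z → False := by
      intro z h1 h2
      rcases z with x' | (i | y)
      · simp only [pupaJoin, SimpleGraph.fromRel_adj, joinRel, false_or, or_false,
          and_true, true_and] at h1 h2
        obtain ⟨-, rfl⟩ := h2
        simp [pupaRel] at h1
      · exact absurd i.isLt (by omega)
      · simp only [pupaJoin, SimpleGraph.fromRel_adj, joinRel, false_or, or_false,
          and_true, true_and] at h1 h2
        obtain ⟨-, rfl⟩ := h1
        simp [pupaRel] at h2
    rcases hit_edge hS hadj12 hcn with h | h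
    · exact hv1 h
    · exact hv2 h
  · have hn2 : 2 ≤ n := by obtain ⟨m, hm⟩ := hne; omega
    -- edges along the middle path
    have adjM : ∀ a : ℕ, ∀ ha : a + 1 < n,
        (pupaJoin k₁ t₁ k₂ t₂ n).Adj (Sum.inr (Sum.inl (⟨a, by omega⟩ : Fin n)))
          (Sum.inr (Sum.inl (⟨a+1, ha⟩ : Fin n))) := by
      intro a ha
      simp only [pupaJoin, SimpleGraph.fromRel_adj, joinRel, Fin.val_mk, ne_eq,
        Sum.inr.injEq, Sum.inl.injEq, Fin.mk.injEq, true_or, or_true, and_true, true_and]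
      omega
    have adjv1 : (pupaJoin k₁ t₁ k₂ t₂ n).Adj (Sum.inl (none : PupaV k₁ t₁))
        (Sum.inr (Sum.inl (⟨0, by omega⟩ : Fin n))) := by
      simp [pupaJoin, SimpleGraph.fromRel_adj, joinRel]
    have adjv2 : (pupaJoin k₁ t₁ k₂ t₂ n).Adj (Sum.inr (Sum.inl (⟨n-1, by omega⟩ : Fin n)))
        (Sum.inr (Sum.inr (none : PupaV k₂ t₂))) := by
      simp [pupaJoin, SimpleGraph.fromRel_adj, joinRel]
    -- no common neighbours on the middle path
    have cn0 : ∀ z, (pupaJoin k₁ t₁ k₂ t₂ n).Adj (Sum.inl (none : PupaV k₁ t₁)) z →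
        (pupaJoin k₁ t₁ k₂ t₂ n).Adj (Sum.inr (Sum.inl (⟨0, by omega⟩ : Fin n))) z → False := by
      intro z h1 h2
      rcases z with x' | (i | y) <;>
        simp only [pupaJoin, SimpleGraph.fromRel_adj, joinRel, Fin.val_mk, ne_eq,
          Sum.inr.injEq, Sum.inl.injEq, Fin.mk.injEq, false_or, or_false,
          and_true, true_and] at h1 h2
      · obtain ⟨-, rfl⟩ := h2
        simp [pupaRel] at h1
      · obtain ⟨-, hi0⟩ := h1
        obtain ⟨-, hd⟩ := h2
        rcases hd with h | h <;> omega
      · obtain ⟨-, hd⟩ := h1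
        omega
    have cnM : ∀ a : ℕ, ∀ ha : a + 2 < n, ∀ z,
        (pupaJoin k₁ t₁ k₂ t₂ n).Adj (Sum.inr (Sum.inl (⟨a+1, by omega⟩ : Fin n))) z →
        (pupaJoin k₁ t₁ k₂ t₂ n).Adj (Sum.inr (Sum.inl (⟨a+2, ha⟩ : Fin n))) z → False := by
      intro a ha z h1 h2
      rcases z with x' | (i | y) <;>
        simp only [pupaJoin, SimpleGraph.fromRel_adj, joinRel, Fin.val_mk, ne_eq,
          Sum.inr.injEq, Sum.inl.injEq, Fin.mk.injEq, false_or, or_false,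
          and_true, true_and] at h1 h2
      · omega
      · obtain ⟨-, hd1⟩ := h1
        obtain ⟨-, hd2⟩ := h2
        rcases hd1 with h | h <;> rcases hd2 with h' | h' <;> omega
      · omega
    have cnLast : ∀ z,
        (pupaJoin k₁ t₁ k₂ t₂ n).Adj (Sum.inr (Sum.inl (⟨n-1, by omega⟩ : Fin n))) z →
        (pupaJoin k₁ t₁ k₂ t₂ n).Adj (Sum.inr (Sum.inr (none : PupaV k₂ t₂))) z → False := by
      intro z h1 h2
      rcases z with x' | (i | y) <;>
        simp only [pupaJoin, SimpleGraph.fromRel_adj, joinRel, Fin.val_mk, ne_eq,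
          Sum.inr.injEq, Sum.inl.injEq, Fin.mk.injEq, false_or, or_false,
          and_true, true_and] at h1 h2
      · omega
      · obtain ⟨hne1, hd1⟩ := h1
        obtain ⟨-, hd2⟩ := h2
        rcases hd1 with h | h <;> omega
      · obtain ⟨-, rfl⟩ := h1
        simp [pupaRel] at h2
    -- induction along the middle path
    have rM : ∀ j : ℕ, ∀ hj : 2*j < n, Sum.inr (Sum.inl (⟨2*j, hj⟩ : Fin n)) ∈ S := by
      intro j
      induction j with
      | zero =>
        intro hj
        rcases hit_edge hS adjv1 cn0 with h | h
        · exact absurd h hv1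
        · exact h
      | succ j ih =>
        intro hj
        have hprev : Sum.inr (Sum.inl (⟨2*j, by omega⟩ : Fin n)) ∈ S := ih (by omega)
        have hmid : Sum.inr (Sum.inl (⟨2*j+1, by omega⟩ : Fin n)) ∉ S := fun h =>
          hS.1 hprev h (adjM (2*j) (by omega))
        rcases hit_edge hS (adjM (2*j+1) (by omega)) (cnM (2*j) (by omega)) with h | h
        · exact absurd h hmid
        · have heq : (2*(j+1) : ℕ) = 2*j+1+1 := by ring
          simp_rw [heq]
          exact h
    -- conclude
    obtain ⟨m, hm⟩ := hne
    have h2m : 2*(m-1) < n := by omega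
    have hr : Sum.inr (Sum.inl (⟨2*(m-1), h2m⟩ : Fin n)) ∈ S := rM (m-1) h2m
    have hlastmem : Sum.inr (Sum.inl (⟨n-1, by omega⟩ : Fin n)) ∉ S := by
      intro h
      have hadjlast : (pupaJoin k₁ t₁ k₂ t₂ n).Adj (Sum.inr (Sum.inl (⟨2*(m-1), h2m⟩ : Fin n)))
          (Sum.inr (Sum.inl (⟨n-1, by omega⟩ : Fin n))) := by
        simp only [pupaJoin, SimpleGraph.fromRel_adj, joinRel, Fin.val_mk, ne_eq,
          Sum.inr.injEq, Sum.inl.injEq, Fin.mk.injEq, true_or, or_true, and_true, true_and]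
        omega
      exact hS.1 hr h hadjlast
    rcases hit_edge hS adjv2 cnLast with h | h
    · exact absurd h hlastmem
    · exact hv2 h
end

section
/- Let G be the graph obtained by taking a disjoint pupa with head v_1 and a butterfly with head v_2, and joining v_1 to v_2 by an internally disjoint induced path of even length with no other edges. Then G has no strong stable set. -/
open SimpleGraph

/-- Vertices of a butterfly with path-lengths `α = |P₁|`, `β = |P₂|`, `γ = |P₃|`:
`none` is the head `v`, and `some i` is the `i`-th vertex of the induced path
`a_1-…-a_k(=b_1)-…-b_ℓ(=c_1)-…-c_m` of total length `α+β+γ`. -/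
abbrev ButterflyV (a b c : ℕ) := Option (Fin (a + b + c + 1))

/-- The butterfly: the head `v` is complete to `P₂ ∪ {a_1, c_m}`, i.e. to the path
vertices with index `0`, `α+β+γ`, or in `[α, α+β]`, and no other edges. -/
def butterflyRel (a b c : ℕ) : ButterflyV a b c → ButterflyV a b c → Prop
  | some i, some j => (j : ℕ) = (i : ℕ) + 1
  | none, some i => (i : ℕ) = 0 ∨ (i : ℕ) = a + b + c ∨ (a ≤ (i : ℕ) ∧ (i : ℕ) ≤ a + b)
  | _, _ => False

def butterfly (a b c : ℕ) : SimpleGraph (ButterflyV a b c) :=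
  SimpleGraph.fromRel (butterflyRel a b c)

/-- A pupa and a butterfly whose heads are joined by an induced path
`v_1-r_1-…-r_n-v_2` of length `n+1`; the path is even, i.e. `n` is odd. -/
def pupaButterflyJoin (k t a b c n : ℕ) :
    SimpleGraph (PupaV k t ⊕ (Fin n ⊕ ButterflyV a b c)) :=
  SimpleGraph.fromRel (joinRel (pupaRel k t) (butterflyRel a b c) none none n)
section helpers
variable {V : Type*} {G : SimpleGraph V} {S : Set V}

lemma isMaxClique_pair {u w : V} (h : G.Adj u w)
    (hm : ∀ z, G.Adj z u → G.Adj z w → False) : IsMaxClique G {u, w} := by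
  constructor
  · intro x hx y hy hxy
    rcases hx with rfl | hx <;> rcases hy with rfl | hy <;> simp_all <;>
      first | exact h | exact h.symm
  · intro D hD hsub
    refine Set.Subset.antisymm ?_ hsub
    intro z hz
    by_cases hzu : z = u
    · exact hzu ▸ Set.mem_insert u {w}
    by_cases hzw : z = w
    · simp [hzw]
    exact absurd (hD hz (hsub (Set.mem_insert u {w})) hzu)
      (fun h1 => hm z h1 (hD hz (hsub (Set.mem_insert_of_mem u rfl)) hzw))

lemma isMaxClique_triple {u w x : V} (h1 : G.Adj u w) (h2 : G.Adj u x) (h3 : G.Adj w x)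
    (hm : ∀ z, G.Adj z u → G.Adj z w → G.Adj z x → False) :
    IsMaxClique G {u, w, x} := by
  constructor
  · intro p hp q hq hpq
    rcases hp with rfl | rfl | hp <;> rcases hq with rfl | rfl | hq <;> simp_all <;>
      first | exact h1 | exact h1.symm | exact h2 | exact h2.symm | exact h3 | exact h3.symm
  · intro D hD hsub
    refine Set.Subset.antisymm ?_ hsub
    intro z hz
    by_cases hzu : z = u
    · exact hzu ▸ Set.mem_insert _ _
    by_cases hzw : z = w
    · simp [hzw]
    by_cases hzx : z = x
    · simp [hzx]
    exact absurd (hD hz (hsub (by simp)) hzu)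
      (fun a1 => hm z a1 (hD hz (hsub (by simp)) hzw) (hD hz (hsub (by simp)) hzx))

lemma pair_mem (hS : StrongStable G S) {u w : V} (h : IsMaxClique G {u, w}) :
    u ∈ S ∨ w ∈ S := by
  obtain ⟨x, hxS, hxC⟩ := hS.2 _ h ⟨u, by simp⟩
  rcases hxC with rfl | rfl
  · exact Or.inl hxS
  · exact Or.inr hxS

lemma triple_mem (hS : StrongStable G S) {u w x : V} (h : IsMaxClique G {u, w, x}) :
    u ∈ S ∨ w ∈ S ∨ x ∈ S := by
  obtain ⟨y, hyS, hyC⟩ := hS.2 _ h ⟨u, by simp⟩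
  rcases hyC with rfl | rfl | rfl
  · exact Or.inl hyS
  · exact Or.inr (Or.inl hyS)
  · exact Or.inr (Or.inr hyS)

end helpers

namespace PBJaux
variable {k t a b c n : ℕ}

/-- Head of the pupa. -/
def V1 : PupaV k t ⊕ (Fin n ⊕ ButterflyV a b c) := Sum.inl none
/-- Head of the butterfly. -/
def V2 : PupaV k t ⊕ (Fin n ⊕ ButterflyV a b c) := Sum.inr (Sum.inr none)
/-- hole vertex -/
def Cv (u : ZMod k) : PupaV k t ⊕ (Fin n ⊕ ButterflyV a b c) := Sum.inl (some (Sum.inl u))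
/-- pupa path vertex -/
def Pv (ht : 0 < t) (j : ℕ) : PupaV k t ⊕ (Fin n ⊕ ButterflyV a b c) :=
  Sum.inl (some (Sum.inr ⟨min j (t - 1), by omega⟩))
/-- join path vertex -/
def Rv (hn : 0 < n) (j : ℕ) : PupaV k t ⊕ (Fin n ⊕ ButterflyV a b c) :=
  Sum.inr (Sum.inl ⟨min j (n - 1), by omega⟩)
/-- butterfly path vertex -/
def Bv (m : ℕ) : PupaV k t ⊕ (Fin n ⊕ ButterflyV a b c) :=
  Sum.inr (Sum.inr (some ⟨min m (a + b + c), by omega⟩))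

lemma zinj (hk : 4 ≤ k) : ∀ m l : ℕ, m < k → l < k → ((m : ZMod k) = l) → m = l := by
  haveI : NeZero k := ⟨by omega⟩
  intro m l hm hl h
  have := congrArg ZMod.val h
  rwa [ZMod.val_cast_of_lt hm, ZMod.val_cast_of_lt hl] at this

lemma z10 (hk : 4 ≤ k) : (1 : ZMod k) ≠ 0 := fun h => by
  have := zinj hk 1 0 (by omega) (by omega) (by exact_mod_cast h); omega
lemma z20 (hk : 4 ≤ k) : (2 : ZMod k) ≠ 0 := fun h => by
  have := zinj hk 2 0 (by omega) (by omega) (by exact_mod_cast h); omega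
lemma z30 (hk : 4 ≤ k) : (3 : ZMod k) ≠ 0 := fun h => by
  have := zinj hk 3 0 (by omega) (by omega) (by exact_mod_cast h); omega
lemma z12 (hk : 4 ≤ k) : (1 : ZMod k) ≠ 2 := fun h => by
  have := zinj hk 1 2 (by omega) (by omega) (by exact_mod_cast h); omega

/-- maximal clique: a hole edge `{c_u, c_{u+1}}`, `u ≠ 0`. -/
lemma maxHoleEdge (hk : 4 ≤ k) {u : ZMod k} (hu : u ≠ 0) :
    IsMaxClique (pupaButterflyJoin k t a b c n) {Cv u, Cv (u + 1)} := by
  apply isMaxClique_pair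
  · simp only [pupaButterflyJoin, fromRel_adj, joinRel, pupaRel, Cv, ne_eq, Sum.inl.injEq,
      Option.some.injEq, Sum.inl.injEq]
    exact ⟨fun h => z10 hk (by linear_combination -h), by simp⟩
  · rintro ((_ | (w | ⟨p, hp⟩)) | (⟨j, hj⟩ | (_ | ⟨x, hx⟩))) h1 h2 <;>
      simp only [pupaButterflyJoin, fromRel_adj, joinRel, pupaRel, Cv, ne_eq, Sum.inl.injEq,
        Option.some.injEq, Sum.inl.injEq, Sum.inr.injEq, reduceCtorEq, false_and, and_false,
        or_self, not_false_eq_true, and_true, true_and, or_false, false_or] at h1 h2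
    · -- z = v1
      rcases h1 with ⟨ht0, hu0⟩ | hu1
      · exact hu hu0
      · rcases h2 with ⟨ht0, hu0⟩ | hu1'
        · exact z20 hk (by linear_combination hu0 - hu1)
        · exact hu (by linear_combination hu1')
    · -- z = c_w
      rcases h1.2 with ha1 | ha1 <;> rcases h2.2 with ha2 | ha2
      · exact z10 hk (by linear_combination ha2 - ha1)
      · exact z30 hk (by linear_combination -ha2 - ha1)
      · exact z10 hk (by linear_combination -ha1 - ha2)
      · exact z12 hk (by linear_combination ha2 - ha1)
    · -- z = p
      rcases h1 with ⟨_, hu0⟩ | hu1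
      · exact hu hu0
      · rcases h2 with ⟨_, hu0⟩ | hu1'
        · exact z20 hk (by linear_combination hu0 - hu1)
        · exact hu (by linear_combination hu1')


/-- Adjacency of consecutive hole vertices. -/
lemma adjCC (hk : 4 ≤ k) (u : ZMod k) :
    (pupaButterflyJoin k t a b c n).Adj (Cv u) (Cv (u + 1)) := by
  simp only [pupaButterflyJoin, fromRel_adj, joinRel, pupaRel, Cv, ne_eq, Sum.inl.injEq,
    Option.some.injEq]
  exact ⟨fun h => z10 hk (by linear_combination -h), by simp⟩

lemma adjV1C1 (hk : 4 ≤ k) :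
    (pupaButterflyJoin k t a b c n).Adj V1 (Cv 1) := by
  simp [pupaButterflyJoin, fromRel_adj, joinRel, pupaRel, Cv, V1]

lemma adjV1C0 (ht : t = 0) :
    (pupaButterflyJoin k t a b c n).Adj V1 (Cv 0) := by
  simp [pupaButterflyJoin, fromRel_adj, joinRel, pupaRel, Cv, V1, ht]

lemma adjV1P0 (ht : 0 < t) :
    (pupaButterflyJoin k t a b c n).Adj V1 (Pv ht 0) := by
  simp only [pupaButterflyJoin, fromRel_adj, joinRel, pupaRel, Pv, V1, ne_eq, reduceCtorEq,
    not_false_eq_true, true_and, Sum.inl.injEq, Fin.val_mk]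
  omega

lemma adjC1P (hk : 4 ≤ k) (ht : 0 < t) (j : ℕ) :
    (pupaButterflyJoin k t a b c n).Adj (Cv 1) (Pv ht j) := by
  simp [pupaButterflyJoin, fromRel_adj, joinRel, pupaRel, Cv, Pv]

lemma adjPP (ht : 0 < t) (j : ℕ) (h : j + 1 < t) :
    (pupaButterflyJoin k t a b c n).Adj (Pv ht j) (Pv ht (j + 1)) := by
  simp only [pupaButterflyJoin, fromRel_adj, joinRel, pupaRel, Pv, ne_eq, Sum.inl.injEq,
    Option.some.injEq, Sum.inr.injEq, Fin.mk.injEq, Fin.val_mk]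
  omega

lemma adjPC0 (ht : 0 < t) :
    (pupaButterflyJoin k t a b c n).Adj (Pv ht (t - 1)) (Cv 0) := by
  simp only [pupaButterflyJoin, fromRel_adj, joinRel, pupaRel, Pv, Cv, ne_eq, Sum.inl.injEq,
    Option.some.injEq, reduceCtorEq, not_false_eq_true, true_and, Fin.val_mk]
  exact Or.inl (Or.inl ⟨by omega, trivial⟩)

lemma adjV1R0 (hn : 0 < n) :
    (pupaButterflyJoin k t a b c n).Adj V1 (Rv hn 0) := by
  simp only [pupaButterflyJoin, fromRel_adj, joinRel, Rv, V1, ne_eq, reduceCtorEq,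
    not_false_eq_true, true_and, Fin.val_mk]
  omega

lemma adjRR (hn : 0 < n) (j : ℕ) (h : j + 1 < n) :
    (pupaButterflyJoin k t a b c n).Adj (Rv hn j) (Rv hn (j + 1)) := by
  simp only [pupaButterflyJoin, fromRel_adj, joinRel, Rv, ne_eq, Sum.inr.injEq, Sum.inl.injEq,
    Fin.mk.injEq, Fin.val_mk]
  omega

lemma adjRV2 (hn : 0 < n) :
    (pupaButterflyJoin k t a b c n).Adj (Rv hn (n - 1)) V2 := by
  simp only [pupaButterflyJoin, fromRel_adj, joinRel, Rv, V2, ne_eq, Sum.inr.injEq, reduceCtorEq,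
    not_false_eq_true, true_and, Fin.val_mk, and_true, Option.some.injEq]
  simp only [min_self]
  tauto

lemma adjBB (m : ℕ) (h : m + 1 ≤ a + b + c) :
    (pupaButterflyJoin k t a b c n).Adj (Bv m) (Bv (m + 1)) := by
  simp only [pupaButterflyJoin, fromRel_adj, joinRel, butterflyRel, Bv, ne_eq, Sum.inr.injEq,
    Option.some.injEq, Fin.mk.injEq, Fin.val_mk]
  omega

lemma adjV2B (m : ℕ) (h : m = 0 ∨ m = a + b + c ∨ (a ≤ m ∧ m ≤ a + b)) :
    (pupaButterflyJoin k t a b c n).Adj V2 (Bv m) := by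
  simp only [pupaButterflyJoin, fromRel_adj, joinRel, butterflyRel, Bv, V2, ne_eq, reduceCtorEq,
    Sum.inr.injEq, not_false_eq_true, true_and, Fin.val_mk]
  omega

/-- triangle `{c_2, p_i, p_{i+1}}` (0-indexed: hub is `Cv 1`). -/
lemma maxPupaTriangle (hk : 4 ≤ k) (ht : 0 < t) (i : ℕ) (hi : i + 1 < t) :
    IsMaxClique (pupaButterflyJoin k t a b c n) {Cv 1, Pv ht i, Pv ht (i + 1)} := by
  apply isMaxClique_triple (adjC1P hk ht i) (adjC1P hk ht (i + 1)) (adjPP ht i hi)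
  rintro ((_ | (w | ⟨p, hp⟩)) | (⟨j, hj⟩ | (_ | ⟨x, hx⟩))) h1 h2 h3 <;>
      simp only [pupaButterflyJoin, fromRel_adj, joinRel, pupaRel, butterflyRel, Cv, Pv, Rv, Bv,
        V1, V2, ne_eq, Sum.inl.injEq, Sum.inr.injEq,
        Option.some.injEq, Fin.mk.injEq, Fin.val_mk, reduceCtorEq, false_and,
        and_false, or_self, not_false_eq_true, and_true, true_and, or_false, false_or] at h1 h2 h3
  · omega
  · -- z = c_w
    rcases h2 with ⟨hit, hw0⟩ | hw1
    · omega
    · rcases h1.2 with hw2 | hw0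
      · exact z12 hk (by linear_combination hw2 + hw1)
      · exact z12 hk (by linear_combination hw0 - hw1)
  · omega

/-- edge `{v1, r_0}` is a maximal clique -/
lemma maxV1R0 (hn : 0 < n) :
    IsMaxClique (pupaButterflyJoin k t a b c n) {V1, Rv hn 0} := by
  apply isMaxClique_pair (adjV1R0 hn)
  rintro ((_ | (w | ⟨p, hp⟩)) | (⟨j, hj⟩ | (_ | ⟨x, hx⟩))) h1 h2 <;>
      simp only [pupaButterflyJoin, fromRel_adj, joinRel, pupaRel, butterflyRel, Cv, Pv, Rv, Bv,
        V1, V2, ne_eq, Sum.inl.injEq, Sum.inr.injEq,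
        Option.some.injEq, Fin.mk.injEq, Fin.val_mk, reduceCtorEq, false_and,
        and_false, or_self, not_false_eq_true, and_true, true_and, or_false, false_or] at h1 h2 <;>
    omega

/-- edge `{r_j, r_{j+1}}` is a maximal clique -/
lemma maxRR (hn : 0 < n) (j : ℕ) (h : j + 2 ≤ n) :
    IsMaxClique (pupaButterflyJoin k t a b c n) {Rv hn j, Rv hn (j + 1)} := by
  apply isMaxClique_pair (adjRR hn j (by omega))
  rintro ((_ | (w | ⟨p, hp⟩)) | (⟨j', hj'⟩ | (_ | ⟨x, hx⟩))) h1 h2 <;>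
      simp only [pupaButterflyJoin, fromRel_adj, joinRel, pupaRel, butterflyRel, Cv, Pv, Rv, Bv,
        V1, V2, ne_eq, Sum.inl.injEq, Sum.inr.injEq,
        Option.some.injEq, Fin.mk.injEq, Fin.val_mk, reduceCtorEq, false_and,
        and_false, or_self, not_false_eq_true, and_true, true_and, or_false, false_or] at h1 h2 <;>
    omega

/-- edge `{v2, b_0}` is a maximal clique -/
lemma maxV2B0 (hn : 0 < n) (ha : 2 ≤ a) (hb : 1 ≤ b) (hc : 1 ≤ c) :
    IsMaxClique (pupaButterflyJoin k t a b c n) {V2, Bv 0} := by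
  apply isMaxClique_pair (adjV2B 0 (by omega))
  rintro ((_ | (w | ⟨p, hp⟩)) | (⟨j, hj⟩ | (_ | ⟨x, hx⟩))) h1 h2 <;>
      simp only [pupaButterflyJoin, fromRel_adj, joinRel, pupaRel, butterflyRel, Cv, Pv, Rv, Bv,
        V1, V2, ne_eq, Sum.inl.injEq, Sum.inr.injEq,
        Option.some.injEq, Fin.mk.injEq, Fin.val_mk, reduceCtorEq, false_and,
        and_false, or_self, not_false_eq_true, and_true, true_and, or_false, false_or] at h1 h2 <;>
    omega

/-- edge `{v2, b_{a+b+c}}` is a maximal clique -/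
lemma maxV2Btop (hn : 0 < n) (ha : 2 ≤ a) (hb : 1 ≤ b) (hc : 2 ≤ c) :
    IsMaxClique (pupaButterflyJoin k t a b c n) {V2, Bv (a + b + c)} := by
  apply isMaxClique_pair (adjV2B _ (by omega))
  rintro ((_ | (w | ⟨p, hp⟩)) | (⟨j, hj⟩ | (_ | ⟨x, hx⟩))) h1 h2 <;>
      simp only [pupaButterflyJoin, fromRel_adj, joinRel, pupaRel, butterflyRel, Cv, Pv, Rv, Bv,
        V1, V2, ne_eq, Sum.inl.injEq, Sum.inr.injEq,
        Option.some.injEq, Fin.mk.injEq, Fin.val_mk, reduceCtorEq, false_and,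
        and_false, or_self, not_false_eq_true, and_true, true_and, or_false, false_or] at h1 h2 <;>
    omega

/-- butterfly path edge `{b_m, b_{m+1}}` away from the head's neighbourhood -/
lemma maxBB (ha : 2 ≤ a) (hb : 1 ≤ b) (hc : 2 ≤ c) (m : ℕ) (h1 : m + 1 ≤ a + b + c)
    (h2 : m + 1 ≤ a ∨ a + b ≤ m) :
    IsMaxClique (pupaButterflyJoin k t a b c n) {Bv m, Bv (m + 1)} := by
  apply isMaxClique_pair (adjBB m h1)
  rintro ((_ | (w | ⟨p, hp⟩)) | (⟨j, hj⟩ | (_ | ⟨x, hx⟩))) ha1 ha2 <;>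
      simp only [pupaButterflyJoin, fromRel_adj, joinRel, pupaRel, butterflyRel, Cv, Pv, Rv, Bv,
        V1, V2, ne_eq, Sum.inl.injEq, Sum.inr.injEq,
        Option.some.injEq, Fin.mk.injEq, Fin.val_mk, reduceCtorEq, false_and,
        and_false, or_self, not_false_eq_true, and_true, true_and, or_false, false_or] at ha1 ha2 <;>
    omega

/-- butterfly triangle `{v2, b_m, b_{m+1}}` for `a ≤ m`, `m+1 ≤ a+b` -/
lemma maxV2BB (ha : 2 ≤ a) (hb : 1 ≤ b) (hc : 2 ≤ c) (m : ℕ) (hm1 : a ≤ m)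
    (hm2 : m + 1 ≤ a + b) :
    IsMaxClique (pupaButterflyJoin k t a b c n) {V2, Bv m, Bv (m + 1)} := by
  apply isMaxClique_triple (adjV2B m (by omega)) (adjV2B (m + 1) (by omega))
    (adjBB m (by omega))
  rintro ((_ | (w | ⟨p, hp⟩)) | (⟨j, hj⟩ | (_ | ⟨x, hx⟩))) h1 h2 h3 <;>
      simp only [pupaButterflyJoin, fromRel_adj, joinRel, pupaRel, butterflyRel, Cv, Pv, Rv, Bv,
        V1, V2, ne_eq, Sum.inl.injEq, Sum.inr.injEq,
        Option.some.injEq, Fin.mk.injEq, Fin.val_mk, reduceCtorEq, false_and,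
        and_false, or_self, not_false_eq_true, and_true, true_and, or_false, false_or] at h1 h2 h3 <;>
    omega

end PBJaux

open PBJaux in
theorem pupa_butterfly_even_path_no_sss (k t a b c n : ℕ)
    (hk : 4 ≤ k) (hke : Even k) (hte : Even t)
    (ha : 2 ≤ a) (hae : Even a) (hbo : Odd b) (hc : 2 ≤ c) (hce : Even c)
    (hno : Odd n) :
    ¬ ∃ S : Set (PupaV k t ⊕ (Fin n ⊕ ButterflyV a b c)),
      StrongStable (pupaButterflyJoin k t a b c n) S := by
  rintro ⟨S, hS⟩
  have hstab := hS.1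
  obtain ⟨n', hn2⟩ : ∃ n', n = 2 * n' + 1 := ⟨n / 2, by rcases hno with ⟨m, hm⟩; omega⟩
  obtain ⟨k', hk2⟩ : ∃ k', k = 2 * k' + 4 := ⟨(k - 4) / 2, by rcases hke with ⟨m, hm⟩; omega⟩
  obtain ⟨a', ha2⟩ : ∃ a', a = 2 * a' + 2 := ⟨(a - 2) / 2, by rcases hae with ⟨m, hm⟩; omega⟩
  obtain ⟨b', hb2⟩ : ∃ b', b = 2 * b' + 1 := ⟨b / 2, by rcases hbo with ⟨m, hm⟩; omega⟩
  obtain ⟨c', hc2⟩ : ∃ c', c = 2 * c' + 2 := ⟨(c - 2) / 2, by rcases hce with ⟨m, hm⟩; omega⟩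
  obtain ⟨t', ht2⟩ : ∃ t', t = 2 * t' := ⟨t / 2, by rcases hte with ⟨m, hm⟩; omega⟩
  have hn : 0 < n := by omega
  have hb1 : 1 ≤ b := by omega
  -- Step 1 : the butterfly head is in S
  have hv2 : (V2 : PupaV k t ⊕ (Fin n ⊕ ButterflyV a b c)) ∈ S := by
    by_contra hv2
    have hB0 : (Bv 0 : PupaV k t ⊕ (Fin n ⊕ ButterflyV a b c)) ∈ S :=
      (pair_mem hS (maxV2B0 hn ha hb1 (by omega))).resolve_left hv2
    have chainA : ∀ j, 2 * j ≤ a → (Bv (2 * j) : PupaV k t ⊕ (Fin n ⊕ ButterflyV a b c)) ∈ S := by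
      intro j
      induction j with
      | zero => intro _; exact hB0
      | succ j ih =>
        intro hj
        have h1 := ih (by omega)
        have h2 : (Bv (2 * j + 1) : PupaV k t ⊕ (Fin n ⊕ ButterflyV a b c)) ∉ S :=
          fun hmem => hstab h1 hmem (adjBB _ (by omega))
        have h3 := (pair_mem hS (maxBB ha hb1 (by omega) (2 * j + 1) (by omega)
          (by omega))).resolve_left h2
        rw [show 2 * (j + 1) = 2 * j + 1 + 1 by ring]
        exact h3
    have hBa : (Bv a : PupaV k t ⊕ (Fin n ⊕ ButterflyV a b c)) ∈ S := by
      have := chainA (a' + 1) (by omega)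
      rwa [show 2 * (a' + 1) = a by omega] at this
    have chainB : ∀ j, 2 * j + 1 ≤ b →
        (Bv (a + 2 * j) : PupaV k t ⊕ (Fin n ⊕ ButterflyV a b c)) ∈ S := by
      intro j
      induction j with
      | zero => intro _; exact hBa
      | succ j ih =>
        intro hj
        have h1 := ih (by omega)
        have h2 : (Bv (a + 2 * j + 1) : PupaV k t ⊕ (Fin n ⊕ ButterflyV a b c)) ∉ S :=
          fun hmem => hstab h1 hmem (adjBB (a + 2 * j) (by omega))
        have h3 := ((triple_mem hS (maxV2BB ha hb1 (by omega) (a + 2 * j + 1) (by omega)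
          (by omega))).resolve_left hv2).resolve_left h2
        rw [show a + 2 * (j + 1) = a + 2 * j + 1 + 1 by ring]
        exact h3
    have hBab : (Bv (a + b) : PupaV k t ⊕ (Fin n ⊕ ButterflyV a b c)) ∉ S := by
      have h1 := chainB b' (by omega)
      intro hmem
      have hadj := adjBB (k := k) (t := t) (n := n) (a := a) (b := b) (c := c) (a + 2 * b') (by omega)
      rw [show a + 2 * b' + 1 = a + b by omega] at hadj
      exact hstab h1 hmem hadj
    have hBtop : (Bv (a + b + c) : PupaV k t ⊕ (Fin n ⊕ ButterflyV a b c)) ∈ S :=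
      (pair_mem hS (maxV2Btop hn ha hb1 hc)).resolve_left hv2
    have chainC : ∀ d j, j + d = c' + 1 →
        (Bv (a + b + 2 * j) : PupaV k t ⊕ (Fin n ⊕ ButterflyV a b c)) ∈ S := by
      intro d
      induction d with
      | zero =>
        intro j hj
        rw [show a + b + 2 * j = a + b + c by omega]
        exact hBtop
      | succ d ih =>
        intro j hj
        have h1 := ih (j + 1) (by omega)
        rw [show a + b + 2 * (j + 1) = a + b + 2 * j + 1 + 1 by ring] at h1
        have h2 : (Bv (a + b + 2 * j + 1) : PupaV k t ⊕ (Fin n ⊕ ButterflyV a b c)) ∉ S :=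
          fun hmem => hstab hmem h1 (adjBB _ (by omega))
        exact (pair_mem hS (maxBB ha hb1 (by omega) (a + b + 2 * j) (by omega)
          (by omega))).resolve_right h2
    have := chainC (c' + 1) 0 (by omega)
    exact hBab this
  -- Step 2 : the pupa head is in S
  have hv1 : (V1 : PupaV k t ⊕ (Fin n ⊕ ButterflyV a b c)) ∈ S := by
    by_contra hv1
    have hR0 : Rv hn 0 ∈ S := (pair_mem hS (maxV1R0 hn)).resolve_left hv1
    have chainR : ∀ j, 2 * j < n → Rv hn (2 * j) ∈ S := by
      intro j
      induction j with
      | zero => intro _; exact hR0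
      | succ j ih =>
        intro hj
        have h1 := ih (by omega)
        have h2 : Rv hn (2 * j + 1) ∉ S :=
          fun hmem => hstab h1 hmem (adjRR hn _ (by omega))
        have h3 := (pair_mem hS (maxRR hn (2 * j + 1) (by omega))).resolve_left h2
        rw [show 2 * (j + 1) = 2 * j + 1 + 1 by ring]
        exact h3
    have hRlast : Rv hn (2 * n') ∈ S := chainR n' (by omega)
    have hadj := adjRV2 (k := k) (t := t) (a := a) (b := b) (c := c) hn
    rw [show n - 1 = 2 * n' by omega] at hadj
    exact hstab hRlast hv2 hadj
  -- Step 3 : contradiction in the pupa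
  have hC1 : (Cv 1 : PupaV k t ⊕ (Fin n ⊕ ButterflyV a b c)) ∉ S :=
    fun h => hstab hv1 h (adjV1C1 hk)
  have chainH : ∀ j, 2 * j + 2 ≤ k →
      (Cv ((2 * j + 2 : ℕ) : ZMod k) : PupaV k t ⊕ (Fin n ⊕ ButterflyV a b c)) ∈ S := by
    intro j
    induction j with
    | zero =>
      intro _
      have h := (pair_mem hS (maxHoleEdge hk (z10 hk))).resolve_left hC1
      have e : ((1 : ZMod k) + 1) = ((2 * 0 + 2 : ℕ) : ZMod k) := by push_cast; ring
      rwa [e] at h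
    | succ j ih =>
      intro hj
      have h1 := ih (by omega)
      have e1 : ((2 * j + 3 : ℕ) : ZMod k) = ((2 * j + 2 : ℕ) : ZMod k) + 1 := by
        push_cast; ring
      have h2 : (Cv ((2 * j + 3 : ℕ) : ZMod k) : PupaV k t ⊕ (Fin n ⊕ ButterflyV a b c)) ∉ S :=
        fun hmem => hstab h1 (by rwa [e1] at hmem) (adjCC hk _)
      have hu : ((2 * j + 3 : ℕ) : ZMod k) ≠ 0 := fun h => by
        have := zinj hk (2 * j + 3) 0 (by omega) (by omega) (by exact_mod_cast h)
        omega
      have h3 := (pair_mem hS (maxHoleEdge hk hu)).resolve_left h2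
      have e2 : ((2 * j + 3 : ℕ) : ZMod k) + 1 = ((2 * (j + 1) + 2 : ℕ) : ZMod k) := by
        push_cast; ring
      rwa [e2] at h3
  have hCk2 : (Cv ((2 * k' + 2 : ℕ) : ZMod k) : PupaV k t ⊕ (Fin n ⊕ ButterflyV a b c)) ∈ S :=
    chainH k' (by omega)
  have e3 : ((2 * k' + 3 : ℕ) : ZMod k) = ((2 * k' + 2 : ℕ) : ZMod k) + 1 := by push_cast; ring
  have hCk1 : (Cv ((2 * k' + 3 : ℕ) : ZMod k) : PupaV k t ⊕ (Fin n ⊕ ButterflyV a b c)) ∉ S :=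
    fun hmem => hstab hCk2 (by rwa [e3] at hmem) (adjCC hk _)
  have hu2 : ((2 * k' + 3 : ℕ) : ZMod k) ≠ 0 := fun h => by
    have := zinj hk (2 * k' + 3) 0 (by omega) (by omega) (by exact_mod_cast h)
    omega
  have hC0 : (Cv 0 : PupaV k t ⊕ (Fin n ⊕ ButterflyV a b c)) ∈ S := by
    have h := (pair_mem hS (maxHoleEdge hk hu2)).resolve_left hCk1
    have e4 : ((2 * k' + 3 : ℕ) : ZMod k) + 1 = 0 := by
      have hx : ((2 * k' + 4 : ℕ) : ZMod k) = 0 := by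
        rw [← hk2]; exact_mod_cast ZMod.natCast_self k
      push_cast at hx ⊢
      linear_combination hx
    rwa [e4] at h
  rcases Nat.eq_zero_or_pos t with ht0 | ht
  · exact hstab hv1 hC0 (adjV1C0 ht0)
  · have hP0 : Pv ht 0 ∉ S := fun h => hstab hv1 h (adjV1P0 ht)
    have chainP : ∀ j, 2 * j + 1 < t → Pv ht (2 * j + 1) ∈ S := by
      intro j
      induction j with
      | zero =>
        intro hj
        exact ((triple_mem hS (maxPupaTriangle hk ht 0 (by omega))).resolve_left
          hC1).resolve_left hP0
      | succ j ih =>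
        intro hj
        have h1 := ih (by omega)
        have h2 : Pv ht (2 * j + 2) ∉ S :=
          fun hmem => hstab h1 hmem (adjPP ht _ (by omega))
        have h3 := ((triple_mem hS (maxPupaTriangle hk ht (2 * j + 2)
          (by omega))).resolve_left hC1).resolve_left h2
        rw [show 2 * (j + 1) + 1 = 2 * j + 2 + 1 by ring]
        exact h3
    have hPt : Pv ht (t - 1) ∈ S := by
      have := chainP (t' - 1) (by omega)
      rwa [show 2 * (t' - 1) + 1 = t - 1 by omega] at this
    exact hstab hPt hC0 (adjPC0 ht)
end
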